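/- arXiv:1701.08651 — 9 statements merged into one kernel-verified Lean document; each statement's English description precedes it below -/
import Mathlib

section
/- The list (3,3,-2,-2,-2) satisfies the JLL inequality n^{m-1} s_{km} ≥ s_k^m with n = 5 for all positive integers k and m, where s_j = 3^j + 3^j + 3·(-2)^j denotes the j-th power sum of the list. -/
open Polynomial

lemma jllA (a b : ℝ) (ha : 0 ≤ a) (hb : 0 ≤ b) :
    ∀ n : ℕ, (2*a + 3*b) ^ (n+1) ≤ 5 ^ n * (2*a^(n+1) + 3*b^(n+1)) := by
  intro n
  induction n with
  | zero => ring_nf; simp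
  | succ n ih =>
    have hcases : (a - b) * (a^(n+1) - b^(n+1)) ≥ 0 := by
      rcases le_total a b with h | h
      · have := pow_le_pow_left₀ ha h (n+1)
        nlinarith
      · have := pow_le_pow_left₀ hb h (n+1)
        nlinarith
    have hstep : (2*a^(n+1) + 3*b^(n+1)) * (2*a + 3*b) ≤ 5 * (2*a^(n+2) + 3*b^(n+2)) := by
      have e1 : a^(n+2) = a^(n+1) * a := by ring
      have e2 : b^(n+2) = b^(n+1) * b := by ring
      nlinarith [hcases]
    calc (2*a + 3*b) ^ (n+2) = (2*a + 3*b)^(n+1) * (2*a + 3*b) := by ring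
      _ ≤ (5 ^ n * (2*a^(n+1) + 3*b^(n+1))) * (2*a + 3*b) :=
          mul_le_mul_of_nonneg_right ih (by linarith)
      _ = 5 ^ n * ((2*a^(n+1) + 3*b^(n+1)) * (2*a + 3*b)) := by ring
      _ ≤ 5 ^ n * (5 * (2*a^(n+2) + 3*b^(n+2))) :=
          mul_le_mul_of_nonneg_left hstep (by positivity)
      _ = 5 ^ (n+1) * (2*a^(n+2) + 3*b^(n+2)) := by ring

lemma jllB (a b : ℝ) (hb : 0 ≤ b) (hab : 3*b ≤ 2*a) :
    ∀ n : ℕ, (2*a - 3*b) ^ (n+1) ≤ 5 ^ n * (2*a^(n+1) - 3*b^(n+1)) := by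
  have ha : 0 ≤ a := by linarith
  have hba : b ≤ a := by linarith
  intro n
  induction n with
  | zero => ring_nf; simp
  | succ n ih =>
    have hpow : b^(n+1) ≤ a^(n+1) := pow_le_pow_left₀ hb hba (n+1)
    have hbp : 0 ≤ b^(n+1) := pow_nonneg hb (n+1)
    have hstep : (2*a^(n+1) - 3*b^(n+1)) * (2*a - 3*b) ≤ 5 * (2*a^(n+2) - 3*b^(n+2)) := by
      have e1 : a^(n+2) = a^(n+1) * a := by ring
      have e2 : b^(n+2) = b^(n+1) * b := by ring
      -- need: 4*b^(n+2) ≤ a^(n+2) + a^(n+1)*b + a*b^(n+1)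
      nlinarith [mul_le_mul hpow hab (by linarith) (pow_nonneg ha (n+1)),
                 mul_le_mul_of_nonneg_right hpow hb,
                 mul_le_mul_of_nonneg_right hab hbp]
    calc (2*a - 3*b) ^ (n+2) = (2*a - 3*b)^(n+1) * (2*a - 3*b) := by ring
      _ ≤ (5 ^ n * (2*a^(n+1) - 3*b^(n+1))) * (2*a - 3*b) :=
          mul_le_mul_of_nonneg_right ih (by linarith)
      _ = 5 ^ n * ((2*a^(n+1) - 3*b^(n+1)) * (2*a - 3*b)) := by ring
      _ ≤ 5 ^ n * (5 * (2*a^(n+2) - 3*b^(n+2))) :=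
          mul_le_mul_of_nonneg_left hstep (by positivity)
      _ = 5 ^ (n+1) * (2*a^(n+2) - 3*b^(n+2)) := by ring

lemma jll32 : ∀ k : ℕ, 1 ≤ k → 3*(2:ℝ)^k ≤ 2*3^k := by
  intro k hk
  induction k with
  | zero => omega
  | succ k ih =>
    rcases Nat.eq_or_lt_of_le hk with h | h
    · simp [← h]; norm_num
    · have hk' : 1 ≤ k := by omega
      have := ih hk'
      have h3 : (0:ℝ) < 3^k := by positivity
      calc 3*(2:ℝ)^(k+1) = 2*(3*2^k) := by ring
        _ ≤ 2*(2*3^k) := by linarith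
        _ ≤ 2*3^(k+1) := by rw [pow_succ]; nlinarith

theorem jll_for_33222 :
    ∀ k m : ℕ, 0 < k → 0 < m →
      (5 : ℝ) ^ (m - 1) * (3 ^ (k * m) + 3 ^ (k * m) + 3 * (-2 : ℝ) ^ (k * m)) ≥
        ((3 : ℝ) ^ k + 3 ^ k + 3 * (-2 : ℝ) ^ k) ^ m := by
  intro k m hk hm
  obtain ⟨n, rfl⟩ : ∃ n, m = n + 1 := ⟨m - 1, (Nat.succ_pred_eq_of_pos hm).symm⟩
  have hm1 : n + 1 - 1 = n := rfl
  rw [hm1]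
  have h3 : (3:ℝ) ^ (k * (n+1)) = ((3:ℝ)^k)^(n+1) := by rw [pow_mul]
  have h2 : (-2:ℝ) ^ (k * (n+1)) = ((-2:ℝ)^k)^(n+1) := by rw [pow_mul]
  rw [h3, h2]
  set a : ℝ := (3:ℝ)^k with ha_def
  have ha : 0 ≤ a := by positivity
  have hb : (0:ℝ) ≤ 2^k := by positivity
  rcases Nat.even_or_odd k with he | ho
  · have hc : (-2:ℝ)^k = 2^k := by
      rw [show (-2:ℝ) = -(2:ℝ) by norm_num, he.neg_pow]
    rw [hc]
    have := jllA a (2^k) ha hb n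
    rw [ge_iff_le]
    calc (a + a + 3*(2:ℝ)^k)^(n+1) = (2*a + 3*(2:ℝ)^k)^(n+1) := by ring_nf
      _ ≤ 5^n * (2*a^(n+1) + 3*((2:ℝ)^k)^(n+1)) := this
      _ = 5^n * (a^(n+1) + a^(n+1) + 3*((2:ℝ)^k)^(n+1)) := by ring
  · have hc : (-2:ℝ)^k = -(2^k) := by
      rw [show (-2:ℝ) = -(2:ℝ) by norm_num, ho.neg_pow]
    rw [hc]
    have hab : 3*(2:ℝ)^k ≤ 2*a := jll32 k hk
    have hB := jllB a (2^k) hb hab n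
    have hcp : -(((2:ℝ)^k)^(n+1)) ≤ (-(2:ℝ)^k)^(n+1) := by
      have h1 : |(-(2:ℝ)^k)^(n+1)| = ((2:ℝ)^k)^(n+1) := by
        rw [abs_pow, abs_neg, abs_of_nonneg hb]
      have := neg_abs_le ((-(2:ℝ)^k)^(n+1))
      rw [h1] at this
      exact this
    have h5 : (0:ℝ) ≤ 5^n := by positivity
    rw [ge_iff_le]
    calc (a + a + 3*(-(2:ℝ)^k))^(n+1) = (2*a - 3*(2:ℝ)^k)^(n+1) := by ring_nf
      _ ≤ 5^n * (2*a^(n+1) - 3*((2:ℝ)^k)^(n+1)) := hB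
      _ ≤ 5^n * (a^(n+1) + a^(n+1) + 3*(-(2:ℝ)^k)^(n+1)) := by nlinarith
end

section
/- The symmetric nonnegative 5×5 matrix A with block diagonal form consisting of the 3×3 block with zero diagonal and all off-diagonal entries 2, and the 2×2 block [[1, √6],[√6, 1]], has characteristic polynomial with roots 4, 3, −2, −2, −2. Hence (3+t, 3, −2, −2, −2) is symmetrically realizable for t = 1. -/
open Polynomial Matrix

theorem symmetric_realization_t_eq_one_3plus1_3 :
    let A : Matrix (Fin 5) (Fin 5) ℝ :=
      !![0, 2, 2, 0, 0;
         2, 0, 2, 0, 0;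
         2, 2, 0, 0, 0;
         0, 0, 0, 1, Real.sqrt 6;
         0, 0, 0, Real.sqrt 6, 0]
    A.IsSymm ∧ (∀ i j, 0 ≤ A i j) ∧
      A.charpoly = (X - C 4) * (X - C 3) * (X + C 2) ^ 3 := by
  intro A
  have hs : Real.sqrt 6 * Real.sqrt 6 = 6 := Real.mul_self_sqrt (by norm_num)
  have hnn : (0:ℝ) ≤ Real.sqrt 6 := Real.sqrt_nonneg 6
  refine ⟨?_, ?_, ?_⟩
  · ext i j
    fin_cases i <;> fin_cases j <;>
      simp [A, Matrix.IsSymm, Matrix.vecHead, Matrix.vecTail]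
  · intro i j
    fin_cases i <;> fin_cases j <;>
      simp [A, Matrix.vecHead, Matrix.vecTail] <;> exact hnn
  · have hA : A = (Matrix.reindex finSumFinEquiv finSumFinEquiv)
        (Matrix.fromBlocks (!![0,2,2;2,0,2;2,2,0] : Matrix (Fin 3) (Fin 3) ℝ) 0 0
          (!![1, Real.sqrt 6; Real.sqrt 6, 0] : Matrix (Fin 2) (Fin 2) ℝ)) := by
      ext i j
      fin_cases i <;> fin_cases j <;>
        simp [A, Matrix.fromBlocks, finSumFinEquiv, Matrix.vecHead, Matrix.vecTail,
          Fin.addCases] <;> rfl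
    rw [hA, Matrix.charpoly_reindex, Matrix.charpoly_fromBlocks_zero₁₂]
    have h1 : (!![0,2,2;2,0,2;2,2,0] : Matrix (Fin 3) (Fin 3) ℝ).charpoly
        = (X - C 4) * (X + C 2) ^ 2 := by
      rw [Matrix.charpoly, Matrix.det_fin_three]
      simp [charmatrix_apply, Matrix.vecHead, Matrix.vecTail]
      simp only [map_ofNat, Polynomial.C_1]
      ring
    have h2 : (!![1, Real.sqrt 6; Real.sqrt 6, 0] : Matrix (Fin 2) (Fin 2) ℝ).charpoly
        = (X - C 3) * (X + C 2) := by
      rw [Matrix.charpoly, Matrix.det_fin_two]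
      simp [charmatrix_apply, Matrix.vecHead, Matrix.vecTail]
      rw [show (C (Real.sqrt 6) * C (Real.sqrt 6) : ℝ[X]) = C 6 by rw [← C_mul, hs]]
      simp only [map_ofNat, Polynomial.C_1]
      ring
    rw [h1, h2]
    ring
end

section
/- Let A be a 5×5 real symmetric entrywise nonnegative matrix with trace zero and eigenvalues λ_1 ≥ λ_2 ≥ λ_3 ≥ λ_4 ≥ λ_5. Then λ_2 + λ_5 ≤ 0. -/
/-!
The diagonal of `A` vanishes, being nonnegative with zero sum. Let `m = A i₀ j₀` be the largest
entry. The test vector `e_{i₀} - e_{j₀}` has Rayleigh quotient `-m`, so `λ₅ ≤ -m`.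

For `λ₂ ≤ m`, take orthonormal eigenvectors `x, y` for `λ₁, λ₂`. Rotating `cos t • x + sin t • y`
by `t ↦ t + π` negates it, so by connectedness of `ℝ` some unit vector `z` of their span has at most
two positive and at most two negative coordinates. Writing `z = z⁺ - z⁻`, nonnegativity of `A` and
`A i j ≤ m` give `zᵀ A z ≤ m ((∑ z⁺)² - ‖z⁺‖² + (∑ z⁻)² - ‖z⁻‖²)`, and Cauchy–Schwarz on the
supports of `z⁺` and `z⁻` (of size at most two) bounds this by `m ‖z‖² = m`. On the other hand
`zᵀ A z ≥ λ₂`.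
-/

open Finset Matrix Polynomial
open scoped RealInnerProductSpace

lemma mul_le_posPart_mul_add_negPart_mul (a b : ℝ) : a * b ≤ a⁺ * b⁺ + a⁻ * b⁻ := by
  rcases le_total 0 a with ha | ha <;> rcases le_total 0 b with hb | hb <;> simp [*] <;> nlinarith

lemma sq_eq_posPart_sq_add_negPart_sq (a : ℝ) : a ^ 2 = a⁺ ^ 2 + a⁻ ^ 2 := by
  rcases le_total 0 a with ha | ha <;> simp [*]

lemma sq_sum_le_card_filter_ne_zero_mul_sum_sq {ι : Type*} [Fintype ι] (f : ι → ℝ) :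
    (∑ i, f i) ^ 2 ≤ #{i | f i ≠ 0} * ∑ i, f i ^ 2 := by
  set s : Finset ι := {i | f i ≠ 0}
  have hsum : ∑ i, f i = ∑ i ∈ s, f i :=
    (sum_subset (subset_univ s) fun i _ hi => by simpa [s] using hi).symm
  calc (∑ i, f i) ^ 2 = (∑ i ∈ s, f i) ^ 2 := by rw [hsum]
    _ ≤ #s * ∑ i ∈ s, f i ^ 2 := sq_sum_le_card_mul_sum_sq
    _ ≤ #s * ∑ i, f i ^ 2 := by
      refine mul_le_mul_of_nonneg_left ?_ (Nat.cast_nonneg _)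
      exact sum_le_sum_of_subset_of_nonneg (subset_univ s) fun i _ _ => sq_nonneg (f i)

lemma dotProduct_mulVec_le_of_card_pos_le_of_card_neg_le {ι : Type*} [Fintype ι]
    {A : Matrix ι ι ℝ} {m : ℝ} {k : ℕ} (hnn : ∀ i j, 0 ≤ A i j) (hdiag : ∀ i, A i i = 0)
    (hoff : ∀ i j, i ≠ j → A i j ≤ m) (hm : 0 ≤ m) {z : ι → ℝ} (hpos : #{i | 0 < z i} ≤ k)
    (hneg : #{i | z i < 0} ≤ k) :
    z ⬝ᵥ A *ᵥ z ≤ (k - 1) * m * (z ⬝ᵥ z) := by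
  classical
  set p : ι → ℝ := fun i => (z i)⁺
  set q : ι → ℝ := fun i => (z i)⁻
  have hsq : ∀ i, z i * z i = p i ^ 2 + q i ^ 2 := fun i => by
    rw [← sq]; exact sq_eq_posPart_sq_add_negPart_sq (z i)
  -- the diagonal correction `m * z i ^ 2` is what turns `∑ᵢ≠ⱼ` into `(∑ p)² + (∑ q)² - ‖z‖²`
  have hterm : ∀ i j, z i * (A i j * z j) ≤
      m * (p i * p j + q i * q j) - if i = j then m * (z i * z i) else 0 := by
    intro i j
    rcases eq_or_ne i j with rfl | hij
    · simp [hdiag, hsq, sq]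
    · have h := mul_le_posPart_mul_add_negPart_mul (z i) (z j)
      have hpq : 0 ≤ p i * p j + q i * q j := by positivity
      rw [if_neg hij]
      nlinarith [hnn i j, hoff i j hij]
  have hp : (∑ i, p i) ^ 2 ≤ k * ∑ i, p i ^ 2 := by
    refine (sq_sum_le_card_filter_ne_zero_mul_sum_sq p).trans ?_
    gcongr
    simpa [p] using hpos
  have hq : (∑ i, q i) ^ 2 ≤ k * ∑ i, q i ^ 2 := by
    refine (sq_sum_le_card_filter_ne_zero_mul_sum_sq q).trans ?_
    gcongr
    simpa [q] using hneg
  have hzz : z ⬝ᵥ z = ∑ i, p i ^ 2 + ∑ i, q i ^ 2 := by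
    simp only [dotProduct, hsq, sum_add_distrib]
  calc z ⬝ᵥ A *ᵥ z = ∑ i, ∑ j, z i * (A i j * z j) := by
        simp only [dotProduct, mulVec, mul_sum]
    _ ≤ ∑ i, ∑ j, (m * (p i * p j + q i * q j) - if i = j then m * (z i * z i) else 0) :=
        sum_le_sum fun i _ => sum_le_sum fun j _ => hterm i j
    _ = m * ((∑ i, p i) ^ 2 + (∑ i, q i) ^ 2) - m * (z ⬝ᵥ z) := by
        rw [sq, sq, sum_mul_sum, sum_mul_sum]
        simp only [sum_sub_distrib, sum_ite_eq, mem_univ, if_true, mul_add, sum_add_distrib,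
          dotProduct, mul_sum]
    _ ≤ (k - 1) * m * (z ⬝ᵥ z) := by
        rw [hzz]; nlinarith

lemma isOpen_setOf_lt_card_filter_pos {ι X : Type*} [Fintype ι] [TopologicalSpace X]
    {f : X → ι → ℝ} (hf : ∀ i, Continuous fun t => f t i) (k : ℕ) :
    IsOpen {t | k < #{i | 0 < f t i}} := by
  have h : {t | k < #{i | 0 < f t i}} =
      ⋃ S : Finset ι, ⋃ (_ : k < #S), ⋂ i ∈ S, {t | 0 < f t i} := by
    ext t
    simp only [Set.mem_ofPred_eq, Set.mem_iUnion, Set.mem_iInter, exists_prop]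
    refine ⟨fun ht => ⟨_, ht, fun i hi => (mem_filter.mp hi).2⟩, ?_⟩
    rintro ⟨S, hS, hpos⟩
    exact hS.trans_le (card_le_card fun i hi => mem_filter.mpr ⟨mem_univ i, hpos i hi⟩)
  rw [h]
  exact isOpen_iUnion fun S => isOpen_iUnion fun _ =>
    isOpen_biInter_finset fun i _ => isOpen_lt continuous_const (hf i)

lemma card_filter_pos_add_card_filter_neg_le {ι : Type*} [Fintype ι] (z : ι → ℝ) :
    #{i | 0 < z i} + #{i | z i < 0} ≤ Fintype.card ι := by
  classical
  rw [← card_union_of_disjoint (disjoint_filter.mpr fun i _ h => lt_asymm h)]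
  exact card_le_univ _

theorem exists_sq_add_sq_eq_one_card_pos_le_and_card_neg_le {ι : Type*} [Fintype ι] {k : ℕ}
    (hk : Fintype.card ι ≤ 2 * k + 1) (x y : ι → ℝ) :
    ∃ c s : ℝ, c ^ 2 + s ^ 2 = 1 ∧
      #{i | 0 < c * x i + s * y i} ≤ k ∧ #{i | c * x i + s * y i < 0} ≤ k := by
  by_contra! h
  set f : ℝ → ι → ℝ := fun t i => Real.cos t * x i + Real.sin t * y i
  have hf : ∀ i, Continuous fun t => f t i := fun i => by fun_prop
  set U := {t | k < #{i | 0 < f t i}}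
  set V := {t | k < #{i | f t i < 0}}
  have hU : IsOpen U := isOpen_setOf_lt_card_filter_pos hf k
  have hV : IsOpen V := by
    simpa only [neg_pos] using
      isOpen_setOf_lt_card_filter_pos (f := fun t i => -f t i) (fun i => (hf i).neg) k
  have hcover : ∀ t, t ∈ U ∪ V := fun t => by
    by_cases ht : #{i | 0 < f t i} ≤ k
    · exact Or.inr (h _ _ (by rw [add_comm, Real.sin_sq_add_cos_sq]) ht)
    · exact Or.inl (not_le.mp ht)
  have hdisj : ∀ t, t ∈ U → t ∉ V := fun t (htU : k < _) (htV : k < _) => by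
    have := card_filter_pos_add_card_filter_neg_le (f t)
    omega
  have hflip : ∀ t, f (t + Real.pi) = -f t := fun t => by
    ext i; simp [f, Real.cos_add_pi, Real.sin_add_pi]; ring
  have hUV : ∀ t, t ∈ U → t + Real.pi ∈ V := fun t (ht : k < _) =>
    show k < _ by simpa only [hflip, Pi.neg_apply, neg_lt_zero] using ht
  have hVU : ∀ t, t ∈ V → t + Real.pi ∈ U := fun t (ht : k < _) =>
    show k < _ by simpa only [hflip, Pi.neg_apply, neg_pos] using ht
  have hUne : (Set.univ ∩ U).Nonempty :=
    (hcover 0).elim (fun h => ⟨0, trivial, h⟩) fun h => ⟨_, trivial, hVU 0 h⟩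
  have hVne : (Set.univ ∩ V).Nonempty :=
    (hcover 0).elim (fun h => ⟨_, trivial, hUV 0 h⟩) fun h => ⟨0, trivial, h⟩
  obtain ⟨t, -, htU, htV⟩ := isPreconnected_univ U V hU hV (fun t _ => hcover t) hUne hVne
  exact hdisj t htU htV

theorem le_sub_one_mul_of_forall_mul_dotProduct_le_on_pair {ι : Type*} [Fintype ι] {k : ℕ}
    (hk : Fintype.card ι ≤ 2 * k + 1) {A : Matrix ι ι ℝ} {m : ℝ} (hnn : ∀ i j, 0 ≤ A i j)
    (hdiag : ∀ i, A i i = 0) (hoff : ∀ i j, i ≠ j → A i j ≤ m) (hm : 0 ≤ m) {x y : ι → ℝ}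
    (hx : x ⬝ᵥ x = 1) (hy : y ⬝ᵥ y = 1) (hxy : x ⬝ᵥ y = 0) {μ : ℝ}
    (h : ∀ c s : ℝ, μ * ((c • x + s • y) ⬝ᵥ (c • x + s • y)) ≤
      (c • x + s • y) ⬝ᵥ A *ᵥ (c • x + s • y)) :
    μ ≤ (k - 1) * m := by
  obtain ⟨c, s, hcs, hpos, hneg⟩ := exists_sq_add_sq_eq_one_card_pos_le_and_card_neg_le hk x y
  have hz : (c • x + s • y) ⬝ᵥ (c • x + s • y) = 1 := by
    simp only [add_dotProduct, dotProduct_add, smul_dotProduct, dotProduct_smul, hx, hy, hxy,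
      dotProduct_comm y x, smul_eq_mul]
    linear_combination hcs
  have hbound := dotProduct_mulVec_le_of_card_pos_le_of_card_neg_le (z := c • x + s • y)
    hnn hdiag hoff hm (by simpa using hpos) (by simpa using hneg)
  have hμ := h c s
  rw [hz] at hμ hbound
  linarith

section TestVector

variable {ι : Type*} [Fintype ι] [DecidableEq ι]

lemma Matrix.dotProduct_mulVec_single_sub_single (A : Matrix ι ι ℝ) (i j : ι) :
    (Pi.single i 1 - Pi.single j 1) ⬝ᵥ A *ᵥ (Pi.single i 1 - Pi.single j 1) =
      A i i + A j j - A i j - A j i := by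
  simp only [mulVec_sub, mulVec_single_one, sub_dotProduct, dotProduct_sub, single_dotProduct,
    one_mul, col_apply]
  ring

lemma dotProduct_single_sub_single_self {i j : ι} (hij : i ≠ j) :
    (Pi.single i 1 - Pi.single j 1 : ι → ℝ) ⬝ᵥ (Pi.single i 1 - Pi.single j 1) = 2 := by
  simp [hij, hij.symm]
  norm_num

lemma le_neg_of_forall_mul_dotProduct_le {A : Matrix ι ι ℝ} (hsym : A.IsSymm)
    (hdiag : ∀ i, A i i = 0) {μ : ℝ} (h : ∀ w, μ * (w ⬝ᵥ w) ≤ w ⬝ᵥ A *ᵥ w) {i j : ι}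
    (hij : i ≠ j) : μ ≤ -A i j := by
  have hw := h (Pi.single i 1 - Pi.single j 1)
  rw [dotProduct_single_sub_single_self hij, dotProduct_mulVec_single_sub_single,
    hdiag, hdiag, hsym.apply i j] at hw
  linarith

end TestVector

namespace LinearMap.IsSymmetric

variable {E : Type*} [NormedAddCommGroup E] [InnerProductSpace ℝ E] [FiniteDimensional ℝ E]
  {T : E →ₗ[ℝ] E} (hT : T.IsSymmetric) {n : ℕ} (hn : Module.finrank ℝ E = n)

theorem eigenvalues_eq_of_charpoly_eq {lam : Fin n → ℝ} (hlam : Antitone lam)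
    (h : T.charpoly = ∏ i, (X - C (lam i))) : hT.eigenvalues hn = lam := by
  apply List.ofFn_injective
  have hroots : T.charpoly.roots = univ.val.map lam := by
    rw [h, roots_prod _ _ (prod_ne_zero_iff.mpr fun i _ => X_sub_C_ne_zero (lam i))]
    simp
  rw [← hT.sort_roots_charpoly_eq_eigenvalues hn, hroots, Multiset.map_map, Fin.univ_val_map]
  simp only [Function.comp_def, RCLike.re_to_real, Multiset.coe_sort]
  refine List.mergeSort_of_pairwise ?_
  simpa only [decide_eq_true_eq, ← List.sortedGE_iff_pairwise] using hlam.sortedGE_ofFn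

theorem mul_norm_sq_le_inner_apply_self {μ : ℝ} {x : E}
    (h : ∀ i, ⟪hT.eigenvectorBasis hn i, x⟫ ≠ 0 → μ ≤ hT.eigenvalues hn i) :
    μ * ‖x‖ ^ 2 ≤ ⟪T x, x⟫ := by
  set b := hT.eigenvectorBasis hn
  have hnorm : ‖x‖ ^ 2 = ∑ i, ⟪b i, x⟫ ^ 2 := by
    simpa using (b.sum_sq_norm_inner_right x).symm
  have hform : ⟪T x, x⟫ = ∑ i, hT.eigenvalues hn i * ⟪b i, x⟫ ^ 2 := by
    rw [← b.sum_inner_mul_inner]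
    refine sum_congr rfl fun i _ => ?_
    rw [hT, hT.apply_eigenvectorBasis, real_inner_smul_right, real_inner_comm x]
    simp only [RCLike.ofReal_real_eq_id, id_eq, b]
    ring
  rw [hnorm, hform, mul_sum]
  refine sum_le_sum fun i _ => ?_
  by_cases hi : ⟪b i, x⟫ = 0
  · simp [hi]
  · exact mul_le_mul_of_nonneg_right (h i hi) (sq_nonneg _)

end LinearMap.IsSymmetric

lemma EuclideanSpace.inner_eq_dotProduct {ι : Type*} [Fintype ι] (x y : EuclideanSpace ℝ ι) :
    ⟪x, y⟫ = x.ofLp ⬝ᵥ y.ofLp := by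
  simp [EuclideanSpace.inner_eq_star_dotProduct, dotProduct_comm]

section Spectrum

variable {ι : Type*} [Fintype ι] [DecidableEq ι]

lemma Matrix.charpoly_toEuclideanLin (A : Matrix ι ι ℝ) :
    (toEuclideanLin A).charpoly = A.charpoly := by
  rw [toEuclideanLin, toLpLin_eq_toLin]
  exact charpoly_toLin A _

lemma Matrix.inner_toEuclideanLin_self (A : Matrix ι ι ℝ) (x : EuclideanSpace ℝ ι) :
    ⟪toEuclideanLin A x, x⟫ = x.ofLp ⬝ᵥ A *ᵥ x.ofLp := by
  simp [EuclideanSpace.inner_eq_star_dotProduct, toLpLin_apply]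

end Spectrum

theorem Matrix.IsSymm.exists_orthonormalBasis_mul_dotProduct_le {n : ℕ}
    {A : Matrix (Fin n) (Fin n) ℝ} (hsym : A.IsSymm) {lam : Fin n → ℝ} (hlam : Antitone lam)
    (hspec : A.charpoly = ∏ i, (X - C (lam i))) :
    ∃ e : OrthonormalBasis (Fin n) ℝ (EuclideanSpace ℝ (Fin n)),
      ∀ (μ : ℝ) (x : EuclideanSpace ℝ (Fin n)), (∀ i, ⟪e i, x⟫ ≠ 0 → μ ≤ lam i) →
        μ * (x.ofLp ⬝ᵥ x.ofLp) ≤ x.ofLp ⬝ᵥ A *ᵥ x.ofLp := by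
  have hT : (toEuclideanLin A).IsSymmetric :=
    isSymmetric_toEuclideanLin_iff.mpr (isHermitian_iff_isSymm.mpr hsym)
  have hn : Module.finrank ℝ (EuclideanSpace ℝ (Fin n)) = n := finrank_euclideanSpace_fin
  have hlam' : hT.eigenvalues hn = lam :=
    hT.eigenvalues_eq_of_charpoly_eq hn hlam (by rw [charpoly_toEuclideanLin, hspec])
  refine ⟨hT.eigenvectorBasis hn, fun μ x h => ?_⟩
  have hray := hT.mul_norm_sq_le_inner_apply_self hn (x := x) (by rwa [hlam'])
  rwa [inner_toEuclideanLin_self, ← real_inner_self_eq_norm_sq,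
    EuclideanSpace.inner_eq_dotProduct] at hray

theorem mcdonald_neumann_trace_zero
    (A : Matrix (Fin 5) (Fin 5) ℝ) (hsym : A.IsSymm) (hnn : ∀ i j, 0 ≤ A i j)
    (htr : A.trace = 0)
    (lam : Fin 5 → ℝ) (hmono : ∀ i j : Fin 5, i ≤ j → lam j ≤ lam i)
    (hspec : A.charpoly = ∏ i : Fin 5, (X - C (lam i))) :
    lam 1 + lam 4 ≤ 0 := by
  have hdiag : ∀ i, A i i = 0 := fun i =>
    (sum_eq_zero_iff_of_nonneg fun j _ => hnn j j).mp htr i (mem_univ i)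
  obtain ⟨⟨i₀, j₀⟩, hij, hmax⟩ :=
    (univ : Finset (Fin 5)).offDiag.exists_max_image (fun p => A p.1 p.2) ⟨(0, 1), by decide⟩
  have hoff : ∀ i j, i ≠ j → A i j ≤ A i₀ j₀ := fun i j h => hmax (i, j) (by simpa using h)
  obtain ⟨e, hray⟩ := hsym.exists_orthonormalBasis_mul_dotProduct_le hmono hspec
  have he : ∀ i j, (e i).ofLp ⬝ᵥ (e j).ofLp = if i = j then 1 else 0 := fun i j => by
    rw [← EuclideanSpace.inner_eq_dotProduct, e.inner_eq_ite]
  have hlow : lam 4 ≤ -A i₀ j₀ :=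
    le_neg_of_forall_mul_dotProduct_le hsym hdiag
      (fun w => hray _ (WithLp.toLp 2 w) fun i _ => hmono i 4 (Fin.le_last i)) (by simpa using hij)
  have hup : lam 1 ≤ (2 - 1) * A i₀ j₀ :=
    le_sub_one_mul_of_forall_mul_dotProduct_le_on_pair (by simp) hnn hdiag hoff (hnn i₀ j₀)
      (he 0 0) (he 1 1) (he 0 1) fun c s => by
        simpa only [WithLp.ofLp_add, WithLp.ofLp_smul] using hray _ (c • e 0 + s • e 1) fun i hi =>
          hmono i 1 (not_lt.mp fun h => hi (by
            simp [inner_add_right, inner_smul_right, e.inner_eq_ite, h.ne', (one_pos.trans h).ne']))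
  linarith
end

section
/- If the list (3+t, 3−t, −2, −2, −2) with 0 < t is the spectrum of a 5×5 real symmetric entrywise nonnegative matrix, then t ≥ 1. -/
/-!
All eigenvalues but two equal `-2`, so `A + 2 • 1 = (5 + t) • u uᵀ + (5 - t) • v vᵀ` for orthonormal
`u, v`. The trace of `A` vanishes, so nonnegativity forces a zero diagonal, and the complex numbers
`z i = √((5 + t) / 2) u i + √((5 - t) / 2) v i * I` are five unit vectors with pairwise nonnegative
inner products `(A i j + 2 δᵢⱼ) / 2`, while `∑ i, z i ^ 2 = t`. Pairwise angles at most `π / 2` put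
the `z i` in a quarter-circle; squaring doubles angles, so the `z i ^ 2` are an odd number of unit
vectors in a closed half-plane, and pairing them off around the median direction shows that their
sum has length at least `1`.
-/

open Polynomial Matrix ComplexConjugate Real

lemma Polynomial.roots_X_sub_C_mul_X_sub_C_mul_X_sub_C_pow {R : Type*} [CommRing R] [IsDomain R]
    (a b c : R) (m : ℕ) :
    ((X - C a) * (X - C b) * (X - C c) ^ m).roots = a ::ₘ b ::ₘ Multiset.replicate m c := by
  rw [← roots_multiset_prod_X_sub_C (a ::ₘ b ::ₘ Multiset.replicate m c)]
  simp [mul_assoc]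

namespace Complex

lemma re_mul_conj_eq_cos_arg_sub {u v : ℂ} (hu : ‖u‖ = 1) (hv : ‖v‖ = 1) :
    (u * conj v).re = Real.cos (arg u - arg v) := by
  have hu0 : u ≠ 0 := by rintro rfl; simp at hu
  have hv0 : v ≠ 0 := by rintro rfl; simp at hv
  rw [Real.cos_sub, cos_arg hu0, cos_arg hv0, sin_arg, sin_arg, hu, hv]
  simp

lemma im_mul_conj_eq_sin_arg_sub {u v : ℂ} (hu : ‖u‖ = 1) (hv : ‖v‖ = 1) :
    (u * conj v).im = Real.sin (arg u - arg v) := by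
  have hu0 : u ≠ 0 := by rintro rfl; simp at hu
  have hv0 : v ≠ 0 := by rintro rfl; simp at hv
  rw [Real.sin_sub, cos_arg hu0, cos_arg hv0, sin_arg, sin_arg, hu, hv]
  simp only [div_one, conj_re, mul_im, conj_im]
  ring

lemma re_add_mul_conj_nonneg_of_arg_le {u v w : ℂ} (hu : ‖u‖ = 1) (hv : ‖v‖ = 1) (hw : ‖w‖ = 1)
    (hu0 : 0 ≤ arg u) (huv : arg u ≤ arg v) (hvw : arg v ≤ arg w) :
    0 ≤ ((u + w) * conj v).re := by
  have hcos : -Real.cos (arg w - arg v) ≤ Real.cos (arg v - arg u) := by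
    rw [← Real.cos_pi_sub]
    apply Real.cos_le_cos_of_nonneg_of_le_pi <;> linarith [arg_le_pi w]
  rw [add_mul, add_re, re_mul_conj_eq_cos_arg_sub hu hv, re_mul_conj_eq_cos_arg_sub hw hv,
    ← Real.cos_neg (arg u - arg v), neg_sub]
  linarith

lemma one_le_norm_sum_of_odd_card {ι : Type*} [DecidableEq ι] {s : Finset ι} (hs : Odd s.card)
    {u : ι → ℂ} (hu : ∀ i ∈ s, ‖u i‖ = 1) (harg : ∀ i ∈ s, 0 ≤ arg (u i)) :
    1 ≤ ‖∑ i ∈ s, u i‖ := by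
  obtain ⟨m, hm⟩ := hs
  induction m generalizing s with
  | zero =>
    obtain ⟨i, rfl⟩ := Finset.card_eq_one.mp hm
    simpa using (hu i (Finset.mem_singleton_self i)).ge
  | succ m ih =>
    obtain ⟨i, hi, hi_min⟩ := s.exists_min_image (fun k => arg (u k))
      (Finset.card_pos.mp (by omega))
    obtain ⟨j, hj, hj_max⟩ := (s.erase i).exists_max_image (fun k => arg (u k))
      (Finset.card_pos.mp (by rw [Finset.card_erase_of_mem hi]; omega))
    -- The remaining directions lie between `u i` and `u j`, hence within `π / 2` of their bisector.
    set t := (s.erase i).erase j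
    have ht : t ⊆ s := (Finset.erase_subset _ _).trans (Finset.erase_subset _ _)
    have hnorm_t : 1 ≤ ‖∑ k ∈ t, u k‖ :=
      ih (fun k hk => hu k (ht hk)) (fun k hk => harg k (ht hk))
        (by rw [Finset.card_erase_of_mem hj, Finset.card_erase_of_mem hi]; omega)
    have hsplit : ∑ k ∈ s, u k = (u i + u j) + ∑ k ∈ t, u k := by
      rw [← Finset.add_sum_erase s u hi, ← Finset.add_sum_erase _ u hj, add_assoc]
    have hcross : 0 ≤ ((u i + u j) * conj (∑ k ∈ t, u k)).re := by
      rw [map_sum, Finset.mul_sum, re_sum]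
      exact Finset.sum_nonneg fun k hk => re_add_mul_conj_nonneg_of_arg_le (hu i hi) (hu k (ht hk))
        (hu j (Finset.mem_of_mem_erase hj)) (harg i hi) (hi_min k (ht hk))
        (hj_max k (Finset.mem_of_mem_erase hk))
    have hsq : normSq (∑ k ∈ t, u k) ≤ normSq (∑ k ∈ s, u k) := by
      rw [hsplit, normSq_add]
      linarith [normSq_nonneg (u i + u j)]
    rw [normSq_eq_norm_sq, normSq_eq_norm_sq] at hsq
    nlinarith [norm_nonneg (∑ k ∈ s, u k)]

lemma exists_forall_im_mul_conj_nonneg {ι : Type*} {s : Finset ι} (hs : s.Nonempty) {z : ι → ℂ}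
    (hz : ∀ i ∈ s, ‖z i‖ = 1) (hre : ∀ i ∈ s, ∀ j ∈ s, 0 ≤ (z i * conj (z j)).re) :
    ∃ k ∈ s, ∀ i ∈ s, 0 ≤ (z i * conj (z k)).im := by
  obtain ⟨j, hj⟩ := hs
  -- Measured from `z j`, all angles lie in `[-π/2, π/2]`; take `z k` with the smallest one.
  set p : ι → ℂ := fun i => z i * conj (z j)
  have hp : ∀ i ∈ s, ‖p i‖ = 1 := fun i hi => by simp [p, hz i hi, hz j hj]
  have hp_arg : ∀ i ∈ s, |arg (p i)| ≤ π / 2 := fun i hi =>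
    abs_arg_le_pi_div_two_iff.mpr (hre i hi j hj)
  obtain ⟨k, hk, hk_min⟩ := s.exists_min_image (fun i => arg (p i)) ⟨j, hj⟩
  refine ⟨k, hk, fun i hi => ?_⟩
  have hzp : z i * conj (z k) = p i * conj (p k) := by
    have : z j * conj (z j) = 1 := by rw [mul_conj, normSq_eq_norm_sq, hz j hj]; simp
    simp only [p, map_mul, conj_conj]
    linear_combination (z i * conj (z k)) * this.symm
  rw [hzp, im_mul_conj_eq_sin_arg_sub (hp i hi) (hp k hk)]
  apply Real.sin_nonneg_of_nonneg_of_le_pi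
  · linarith [hk_min i hi]
  · linarith [abs_le.mp (hp_arg i hi), abs_le.mp (hp_arg k hk)]

lemma one_le_norm_sum_sq_of_odd_card {ι : Type*} [DecidableEq ι] {s : Finset ι}
    (hs : Odd s.card) {z : ι → ℂ} (hz : ∀ i ∈ s, ‖z i‖ = 1)
    (hre : ∀ i ∈ s, ∀ j ∈ s, 0 ≤ (z i * conj (z j)).re) : 1 ≤ ‖∑ i ∈ s, z i ^ 2‖ := by
  obtain ⟨k, hk, hk_im⟩ := exists_forall_im_mul_conj_nonneg (Finset.card_pos.mp hs.pos) hz hre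
  have hsum : ∑ i ∈ s, (z i * conj (z k)) ^ 2 = conj (z k) ^ 2 * ∑ i ∈ s, z i ^ 2 := by
    rw [Finset.mul_sum]
    exact Finset.sum_congr rfl fun i _ => by ring
  have := one_le_norm_sum_of_odd_card hs (u := fun i => (z i * conj (z k)) ^ 2)
    (fun i hi => by simp [hz i hi, hz k hk])
    (fun i hi => arg_nonneg_iff.mpr <| by
      rw [pow_two, mul_im]
      nlinarith [hre i hi k hk, hk_im i hi])
  simpa [hsum, hz k hk] using this

end Complex

lemma Finset.exists_mem_erase_map_val_eq_of_map_val_eq_cons {α β : Type*} [DecidableEq α]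
    [DecidableEq β] {f : α → β} {s : Finset α} {b : β} {m : Multiset β}
    (h : s.val.map f = b ::ₘ m) : ∃ a ∈ s, f a = b ∧ (s.erase a).val.map f = m := by
  obtain ⟨a, ha, rfl⟩ := Multiset.mem_map.mp (h ▸ Multiset.mem_cons_self _ _)
  refine ⟨a, ha, rfl, ?_⟩
  rw [Finset.erase_val, Multiset.map_erase_of_mem _ _ ha, h, Multiset.erase_cons_head]

lemma exists_complex_re_mul_conj_eq {n : Type*} [Fintype n] {u v : n → ℝ}
    (hu : u ⬝ᵥ u = 1) (hv : v ⬝ᵥ v = 1) (huv : u ⬝ᵥ v = 0) {α β : ℝ} (hα : 0 ≤ α) (hβ : 0 ≤ β) :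
    ∃ z : n → ℂ, (∀ i j, (z i * conj (z j)).re = α * (u i * u j) + β * (v i * v j)) ∧
      ∑ i, z i ^ 2 = α - β := by
  refine ⟨fun i => ⟨√α * u i, √β * v i⟩, fun i j => ?_, ?_⟩
  · simp only [Complex.mul_re, Complex.conj_re, Complex.conj_im]
    linear_combination (u i * u j) * Real.sq_sqrt hα + (v i * v j) * Real.sq_sqrt hβ
  simp only [dotProduct] at hu hv huv
  apply Complex.ext
  · have hsummand : ∀ i, √α * u i * (√α * u i) - √β * v i * (√β * v i)
        = α * (u i * u i) - β * (v i * v i) := fun i => by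
      linear_combination (u i * u i) * Real.sq_sqrt hα - (v i * v i) * Real.sq_sqrt hβ
    simp only [Complex.re_sum, pow_two, Complex.mul_re, Complex.sub_re, Complex.ofReal_re,
      hsummand, Finset.sum_sub_distrib, ← Finset.mul_sum, hu, hv, mul_one]
  · have hsummand : ∀ i, √α * u i * (√β * v i) + √β * v i * (√α * u i)
        = 2 * √α * √β * (u i * v i) := fun i => by ring
    simp only [Complex.im_sum, pow_two, Complex.mul_im, Complex.sub_im, Complex.ofReal_im,
      hsummand, ← Finset.mul_sum, huv, mul_zero, sub_zero]

namespace Matrix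

variable {n : Type*} [Fintype n]

lemma diag_eq_zero_of_nonneg_of_trace_eq_zero {A : Matrix n n ℝ} (hA : ∀ i j, 0 ≤ A i j)
    (htr : A.trace = 0) (i : n) : A i i = 0 :=
  (Finset.sum_eq_zero_iff_of_nonneg (fun i _ => hA i i)).mp htr i (Finset.mem_univ i)

lemma mul_diagonal_mul_transpose {R : Type*} [CommSemiring R] [DecidableEq n]
    (U : Matrix n n R) (d : n → R) :
    U * diagonal d * Uᵀ = ∑ k, d k • vecMulVec (Uᵀ k) (Uᵀ k) := by
  ext i j
  simp [mul_apply, vecMulVec_apply, Matrix.sum_apply, diagonal, mul_comm, mul_left_comm]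

theorem IsHermitian.exists_eq_smul_one_add_smul_vecMulVec [DecidableEq n] {A : Matrix n n ℝ}
    (hA : A.IsHermitian) {a b c : ℝ} {m : ℕ}
    (hroots : A.charpoly.roots = a ::ₘ b ::ₘ Multiset.replicate m c) :
    ∃ u v : n → ℝ, u ⬝ᵥ u = 1 ∧ v ⬝ᵥ v = 1 ∧ u ⬝ᵥ v = 0 ∧
      A = c • 1 + (a - c) • vecMulVec u u + (b - c) • vecMulVec v v := by
  set U : Matrix n n ℝ := (hA.eigenvectorUnitary : Matrix n n ℝ)
  rw [hA.roots_charpoly_eq_eigenvalues, RCLike.ofReal_real_eq_id, Function.id_comp] at hroots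
  set μ := hA.eigenvalues
  have hUUt : U * Uᵀ = 1 := by
    simpa [U, star_eq_conjTranspose] using mem_unitaryGroup_iff.mp hA.eigenvectorUnitary.2
  have hcols : ∀ k l, Uᵀ k ⬝ᵥ Uᵀ l = (1 : Matrix n n ℝ) k l := fun k l => by
    rw [← mul_eq_one_comm.mp hUUt, mul_apply']
    rfl
  have hspec : A = U * diagonal μ * Uᵀ := by
    simpa [Unitary.conjStarAlgAut_apply, star_eq_conjTranspose, U] using hA.spectral_theorem
  obtain ⟨k₁, -, hk₁, h₁⟩ := Finset.exists_mem_erase_map_val_eq_of_map_val_eq_cons hroots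
  obtain ⟨k₂, hk₂, hk₂b, h₂⟩ := Finset.exists_mem_erase_map_val_eq_of_map_val_eq_cons h₁
  have hk₁₂ : k₁ ≠ k₂ := (Finset.ne_of_mem_erase hk₂).symm
  have hrest : ∀ k, k ≠ k₁ ∧ k ≠ k₂ → μ k = c := fun k hk =>
    Multiset.eq_of_mem_replicate <| h₂ ▸ Multiset.mem_map_of_mem _ <|
      Finset.mem_val.mpr (by simp [hk.1, hk.2])
  refine ⟨Uᵀ k₁, Uᵀ k₂, by simp [hcols], by simp [hcols], by simp [hcols, hk₁₂], ?_⟩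
  have hshift : A - c • 1 = U * diagonal (fun k => μ k - c) * Uᵀ := by
    rw [hspec, ← diagonal_sub, mul_sub, sub_mul, ← smul_one_eq_diagonal]
    simp [hUUt]
  rw [add_assoc, ← sub_eq_iff_eq_add', hshift, mul_diagonal_mul_transpose,
    Fintype.sum_eq_add k₁ k₂ hk₁₂ (fun k hk => by simp [hrest k hk]), hk₁, hk₂b]

lemma exists_complex_of_eq_smul_one_add_smul_vecMulVec [DecidableEq n]
    {A : Matrix n n ℝ} {u v : n → ℝ} (hu : u ⬝ᵥ u = 1) (hv : v ⬝ᵥ v = 1)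
    (huv : u ⬝ᵥ v = 0) {α β c : ℝ} (hα : 0 ≤ α) (hβ : 0 ≤ β) (hc : c < 0)
    (hA : A = c • 1 + α • vecMulVec u u + β • vecMulVec v v) (hdiag : ∀ i, A i i = 0) :
    ∃ z : n → ℂ, (∀ i, ‖z i‖ = 1) ∧
      (∀ i j, (z i * conj (z j)).re = (A i j - c * (1 : Matrix n n ℝ) i j) / -c) ∧
      ∑ i, z i ^ 2 = ((α - β) / -c : ℝ) := by
  obtain ⟨z, hz, hsum⟩ := exists_complex_re_mul_conj_eq hu hv huv
    (div_nonneg hα (neg_nonneg.mpr hc.le)) (div_nonneg hβ (neg_nonneg.mpr hc.le))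
  have hzA : ∀ i j, (z i * conj (z j)).re = (A i j - c * (1 : Matrix n n ℝ) i j) / -c :=
      fun i j => by
    rw [hz, hA]
    simp only [Matrix.add_apply, Matrix.smul_apply, smul_eq_mul, vecMulVec_apply]
    ring
  refine ⟨z, fun i => ?_, hzA, by rw [hsum]; push_cast; ring⟩
  have hii := hzA i i
  rw [Complex.mul_conj, Complex.ofReal_re, Complex.normSq_eq_norm_sq, hdiag, one_apply_eq,
    zero_sub, mul_one, div_self (neg_ne_zero.mpr hc.ne)] at hii
  exact (pow_eq_one_iff_of_nonneg (norm_nonneg _) two_ne_zero).mp hii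

end Matrix

theorem symmetric_realizable_hat_sigma_implies_t_ge_one (t : ℝ) (ht : 0 < t)
    (h : ∃ A : Matrix (Fin 5) (Fin 5) ℝ,
        A.IsSymm ∧ (∀ i j, 0 ≤ A i j) ∧
        A.charpoly = (X - C (3 + t)) * (X - C (3 - t)) * (X + C 2) ^ 3) :
    1 ≤ t := by
  by_contra! hlt
  obtain ⟨A, hsym, hnn, hcp⟩ := h
  have hA : A.IsHermitian := isHermitian_iff_isSymm.mpr hsym
  have hroots : A.charpoly.roots = (3 + t) ::ₘ (3 - t) ::ₘ Multiset.replicate 3 (-2) := by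
    rw [hcp, ← sub_neg_eq_add (X : ℝ[X]) (C 2), ← C_neg, roots_X_sub_C_mul_X_sub_C_mul_X_sub_C_pow]
  have hdiag : ∀ i, A i i = 0 := diag_eq_zero_of_nonneg_of_trace_eq_zero hnn <| by
    rw [trace_eq_sum_roots_charpoly_of_splits hA.splits_charpoly, hroots]
    simp only [Multiset.replicate_succ, Multiset.replicate_zero, Multiset.cons_zero,
      Multiset.sum_cons, Multiset.sum_singleton]
    ring
  obtain ⟨u, v, hu, hv, huv, hAuv⟩ := hA.exists_eq_smul_one_add_smul_vecMulVec hroots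
  obtain ⟨z, hz_norm, hz_re, hsum⟩ := exists_complex_of_eq_smul_one_add_smul_vecMulVec hu hv huv
    (by linarith) (by linarith) (by norm_num) hAuv hdiag
  have key := Complex.one_le_norm_sum_sq_of_odd_card (s := Finset.univ) (by decide)
    (fun i _ => hz_norm i) (fun i _ j _ => by
      rw [hz_re]
      linarith [hnn i j, zero_le_one_elem (α := ℝ) i j])
  rw [hsum, show (3 + t - -2 - (3 - t - -2)) / -(-2) = t by ring, Complex.norm_real,
    Real.norm_of_nonneg ht.le] at key
  linarith
end

section
/- For every t with t² ≥ 16√6 − 39, the 5×5 matrix A = [[0,1,0,0,0],[(15+t²)/2,0,1,0,0],[0,0,0,1,0],[0,0,0,0,1],[3t⁴+58t²+3,(t⁴+78t²−15)/4,10+6t²,(15+t²)/2,0]] is entrywise nonnegative and has characteristic polynomial (x−(3+t))(x−(3−t))(x+2)³. -/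
/-!
Expanding `det (X - A)` for a companion matrix with one extra subdiagonal entry `e` gives
`X⁵ - (d + e) X³ - c X² + (d e - b) X + (c e - a)`, and the entries of the matrix are chosen so that
these coefficients are those of `(X - 3 - t)(X - 3 + t)(X + 2)³`. The only entry whose sign depends
on `t` is `(s² + 78 s - 15) / 4` with `s = t²`, and `s² + 78 s - 15 = (s + 39)² - (16 √6)²` is
nonnegative once `s + 39 ≥ 16 √6`.
-/

open Polynomial

variable {R : Type*}

def almostCompanion [Zero R] [One R] (a b c d e : R) : Matrix (Fin 5) (Fin 5) R :=
  !![0, 1, 0, 0, 0;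
     e, 0, 1, 0, 0;
     0, 0, 0, 1, 0;
     0, 0, 0, 0, 1;
     a, b, c, d, 0]

theorem almostCompanion_nonneg [Zero R] [One R] [Preorder R] [ZeroLEOneClass R] {a b c d e : R}
    (ha : 0 ≤ a) (hb : 0 ≤ b) (hc : 0 ≤ c) (hd : 0 ≤ d) (he : 0 ≤ e) (i j : Fin 5) :
    0 ≤ almostCompanion a b c d e i j := by
  fin_cases i <;> fin_cases j <;> simp [almostCompanion, *]

theorem charmatrix_almostCompanion [CommRing R] (a b c d e : R) :
    (almostCompanion a b c d e).charmatrix =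
      !![X, -1, 0, 0, 0;
         -C e, X, -1, 0, 0;
         0, 0, X, -1, 0;
         0, 0, 0, X, -1;
         -C a, -C b, -C c, -C d, X] := by
  ext i j
  fin_cases i <;> fin_cases j <;> simp [almostCompanion]

theorem charpoly_almostCompanion [CommRing R] (a b c d e : R) :
    (almostCompanion a b c d e).charpoly =
      X ^ 5 - C (d + e) * X ^ 3 - C c * X ^ 2 + C (d * e - b) * X + C (c * e - a) := by
  rw [Matrix.charpoly, charmatrix_almostCompanion]
  simp only [Matrix.det_succ_row_zero, Fin.sum_univ_succ, Matrix.det_unique, Matrix.of_apply,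
    Matrix.submatrix_apply, Matrix.cons_val, Fin.succAbove, Fin.reduceSucc, Fin.default_eq_zero,
    Fin.coe_ofNat_eq_mod, ↓reduceIte, Fin.reduceCastSucc, Fin.reduceLT, map_add, map_sub, map_mul]
  ring

theorem sub_mul_sub_mul_add_two_pow_three [CommRing R] (t : R) :
    (X - C (3 + t)) * (X - C (3 - t)) * (X + C 2) ^ 3 =
      X ^ 5 - C (15 + t ^ 2) * X ^ 3 - C (10 + 6 * t ^ 2) * X ^ 2 + C (60 - 12 * t ^ 2) * X
        + C (72 - 8 * t ^ 2) := by
  simp only [map_add, map_sub, map_mul, map_pow, map_ofNat]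
  ring

theorem sq_add_78_mul_sub_15_nonneg {s : ℝ} (hs : 16 * Real.sqrt 6 - 39 ≤ s) :
    0 ≤ s ^ 2 + 78 * s - 15 := by
  have h : (16 * Real.sqrt 6) ^ 2 ≤ (s + 39) ^ 2 := by
    gcongr
    linarith
  nlinarith [Real.sq_sqrt (show (0 : ℝ) ≤ 6 by norm_num)]

theorem laffey_meehan_realization (t : ℝ) (ht : t ^ 2 ≥ 16 * Real.sqrt 6 - 39) :
    let A : Matrix (Fin 5) (Fin 5) ℝ :=
      !![0, 1, 0, 0, 0;
         (15 + t ^ 2) / 2, 0, 1, 0, 0;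
         0, 0, 0, 1, 0;
         0, 0, 0, 0, 1;
         3 * t ^ 4 + 58 * t ^ 2 + 3, (t ^ 4 + 78 * t ^ 2 - 15) / 4,
           10 + 6 * t ^ 2, (15 + t ^ 2) / 2, 0]
    (∀ i j, 0 ≤ A i j) ∧
      A.charpoly = (X - C (3 + t)) * (X - C (3 - t)) * (X + C 2) ^ 3 := by
  change (∀ i j, 0 ≤ almostCompanion _ _ _ _ _ i j) ∧ (almostCompanion _ _ _ _ _).charpoly = _
  have hb : 0 ≤ (t ^ 4 + 78 * t ^ 2 - 15) / 4 := by
    linarith [sq_add_78_mul_sub_15_nonneg ht, show (t ^ 2) ^ 2 = t ^ 4 by ring]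
  refine ⟨almostCompanion_nonneg (by positivity) hb (by positivity) (by positivity) (by positivity),
    ?_⟩
  have hX3 : (15 + t ^ 2) / 2 + (15 + t ^ 2) / 2 = 15 + t ^ 2 := by ring
  have hX1 : (15 + t ^ 2) / 2 * ((15 + t ^ 2) / 2) - (t ^ 4 + 78 * t ^ 2 - 15) / 4 =
      60 - 12 * t ^ 2 := by ring
  have hX0 : (10 + 6 * t ^ 2) * ((15 + t ^ 2) / 2) - (3 * t ^ 4 + 58 * t ^ 2 + 3) =
      72 - 8 * t ^ 2 := by ring
  rw [charpoly_almostCompanion, hX3, hX1, hX0, sub_mul_sub_mul_add_two_pow_three]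
end

section
/- For every real t ≥ (1/10)√(120√1066 − 3899), the 5×5 matrix A = [[0,1,0,0,0],[(1501+100t²)/200,0,1,0,0],[0,0,0,1,0],[0,0,0,0,1],[(15000t⁴+289950t²+14649)/5000,(10000t⁴+779800t²−148199)/40000,(150t²+249)/25,(1501+100t²)/200,0]] is entrywise nonnegative and has characteristic polynomial (x−(3+t))(x−(3−t))(x+1.9)(x+2)(x+2.1). -/
/-!
Expanding along the first row, a matrix of the shape of `realizingMatrix a b c d` has
characteristic polynomial `x⁵ - 2a x³ - d x² + (a² - c) x + (a d - b)`; the entries of `A` are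
read off by matching this with the expanded target polynomial. All of them except `c` are visibly
nonnegative, and `c ≥ 0` says `10000 s² + 779800 s ≥ 148199` for `s = t²`, whose positive
threshold is `s = t₀² = (120√1066 - 3899) / 100`.
-/

open Polynomial

def realizingMatrix {R : Type*} [Zero R] [One R] (a b c d : R) : Matrix (Fin 5) (Fin 5) R :=
  !![0, 1, 0, 0, 0;
     a, 0, 1, 0, 0;
     0, 0, 0, 1, 0;
     0, 0, 0, 0, 1;
     b, c, d, a, 0]

theorem realizingMatrix_nonneg {R : Type*} [Zero R] [One R] [Preorder R] [ZeroLEOneClass R]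
    {a b c d : R} (ha : 0 ≤ a) (hb : 0 ≤ b) (hc : 0 ≤ c) (hd : 0 ≤ d) (i j : Fin 5) :
    0 ≤ realizingMatrix a b c d i j := by
  fin_cases i <;> fin_cases j <;> simp [realizingMatrix, ha, hb, hc, hd, zero_le_one]

theorem charpoly_realizingMatrix {R : Type*} [CommRing R] (a b c d : R) :
    (realizingMatrix a b c d).charpoly =
      X ^ 5 - C (2 * a) * X ^ 3 - C d * X ^ 2 + C (a ^ 2 - c) * X + C (a * d - b) := by
  rw [Matrix.charpoly, Matrix.det_succ_row_zero]
  simp [Fin.sum_univ_succ, Matrix.det_succ_row_zero, Fin.succAbove, realizingMatrix,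
    Matrix.charmatrix_apply, Matrix.submatrix]
  rw [map_ofNat]
  ring

theorem le_quartic_of_threshold_le {t : ℝ}
    (ht : (1 / 10) * Real.sqrt (120 * Real.sqrt 1066 - 3899) ≤ t) :
    148199 ≤ 10000 * t ^ 4 + 779800 * t ^ 2 := by
  have h1066 : Real.sqrt 1066 ^ 2 = 1066 := Real.sq_sqrt (by norm_num)
  have hroot_nonneg : 0 ≤ 120 * Real.sqrt 1066 - 3899 := by
    nlinarith [Real.sqrt_nonneg 1066]
  have ht2 : (120 * Real.sqrt 1066 - 3899) / 100 ≤ t ^ 2 := by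
    have := pow_le_pow_left₀ (by positivity) ht 2
    rw [mul_pow, Real.sq_sqrt hroot_nonneg] at this
    linarith
  nlinarith [Real.sqrt_nonneg 1066]

theorem perturbed_list_realization (t : ℝ)
    (ht : t ≥ (1 / 10) * Real.sqrt (120 * Real.sqrt 1066 - 3899)) :
    let A : Matrix (Fin 5) (Fin 5) ℝ :=
      !![0, 1, 0, 0, 0;
         (1501 + 100 * t ^ 2) / 200, 0, 1, 0, 0;
         0, 0, 0, 1, 0;
         0, 0, 0, 0, 1;
         (15000 * t ^ 4 + 289950 * t ^ 2 + 14649) / 5000,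
           (10000 * t ^ 4 + 779800 * t ^ 2 - 148199) / 40000,
           (150 * t ^ 2 + 249) / 25, (1501 + 100 * t ^ 2) / 200, 0]
    (∀ i j, 0 ≤ A i j) ∧
      A.charpoly = (X - C (3 + t)) * (X - C (3 - t)) *
        (X + C (19 / 10)) * (X + C 2) * (X + C (21 / 10)) := by
  change (∀ i j, 0 ≤ realizingMatrix _ _ _ _ i j) ∧ (realizingMatrix _ _ _ _).charpoly = _
  have hc : 0 ≤ (10000 * t ^ 4 + 779800 * t ^ 2 - 148199) / 40000 :=
    div_nonneg (by linarith [le_quartic_of_threshold_le ht]) (by norm_num)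
  refine ⟨realizingMatrix_nonneg (by positivity) (by positivity) hc (by positivity), ?_⟩
  rw [charpoly_realizingMatrix]
  refine Polynomial.funext fun x => ?_
  simp only [eval_add, eval_sub, eval_mul, eval_pow, eval_X, eval_C]
  ring
end

section
/- If the list (3+t, 3−t, −1.9, −2, −2.1) with t > 0 is the spectrum of a 5×5 real symmetric entrywise nonnegative matrix, then t ≥ 0.9. -/
/-!
The eigenvalues sum to zero, so the nonnegative diagonal of `A` vanishes; since they are all
at least `-2.1`, the quadratic form of `A + 2.1 I` at `eᵢ - eⱼ` bounds every off-diagonal entry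
by `2.1`. Hence a nonnegative `x ≠ 0` with `μ x ≤ A x` supported on at most two coordinates has
`μ ‖x‖² ≤ xᵀ A x ≤ 2.1 · 2 xᵢ xⱼ ≤ 2.1 ‖x‖²`, i.e. `μ ≤ 2.1`. If `t < 0.9`, both `3 ± t`
exceed `2.1`, so the positive and the negative part of an eigenvector for either of them
cannot both be nonzero on five coordinates: both eigenvectors may be taken nonnegative. Being
orthogonal, they then have disjoint supports, one of them of size at most two.
-/

open Polynomial Matrix Finset

namespace Matrix

variable {n : Type*} [Fintype n]

theorem exists_mulVec_eq_smul_of_mem_spectrum [DecidableEq n] {K : Type*} [Field K]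
    {A : Matrix n n K} {μ : K} (h : μ ∈ spectrum K A) : ∃ v, v ≠ 0 ∧ A *ᵥ v = μ • v := by
  rw [← spectrum_toLin', ← Module.End.hasEigenvalue_iff_mem_spectrum] at h
  obtain ⟨v, hv⟩ := h.exists_hasEigenvector
  exact ⟨v, hv.2, by simpa using hv.apply_eq_smul⟩

theorem IsSymm.dotProduct_eq_zero_of_mulVec_eq_smul {R : Type*} [CommRing R] [IsDomain R]
    {A : Matrix n n R} (hA : A.IsSymm) {μ ν : R} (hμν : μ ≠ ν) {v w : n → R}
    (hv : A *ᵥ v = μ • v) (hw : A *ᵥ w = ν • w) : v ⬝ᵥ w = 0 := by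
  have h : μ * (v ⬝ᵥ w) = ν * (v ⬝ᵥ w) := by
    calc μ * (v ⬝ᵥ w) = (A *ᵥ v) ⬝ᵥ w := by rw [hv, smul_dotProduct, smul_eq_mul]
      _ = v ⬝ᵥ (A *ᵥ w) := by rw [← vecMul_transpose, hA.eq, ← dotProduct_mulVec]
      _ = ν * (v ⬝ᵥ w) := by rw [hw, dotProduct_smul, smul_eq_mul]
  exact (mul_eq_mul_right_iff.mp h).resolve_left hμν

open MatrixOrder in
theorem IsHermitian.mul_dotProduct_self_le [DecidableEq n] {A : Matrix n n ℝ}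
    (hA : A.IsHermitian) {c : ℝ} (hc : ∀ μ ∈ spectrum ℝ A, c ≤ μ) (x : n → ℝ) :
    c * (x ⬝ᵥ x) ≤ x ⬝ᵥ (A *ᵥ x) := by
  have hle := (algebraMap_le_iff_le_spectrum (r := c) (a := A) hA.isSelfAdjoint).mpr hc
  simpa [sub_mulVec, Algebra.algebraMap_eq_smul_one, smul_mulVec] using
    (le_iff.mp hle).dotProduct_mulVec_nonneg x

theorem IsHermitian.two_mul_apply_le [DecidableEq n] {A : Matrix n n ℝ} (hA : A.IsHermitian)
    {c : ℝ} (hc : ∀ μ ∈ spectrum ℝ A, c ≤ μ) {i j : n} (hij : i ≠ j) :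
    2 * A i j ≤ A i i + A j j - 2 * c := by
  let e : n → ℝ := Pi.single i 1 - Pi.single j 1
  have hform : e ⬝ᵥ (A *ᵥ e) = A i i + A j j - A i j - A j i := by
    simp only [e, mulVec_sub, mulVec_single, MulOpposite.op_one, one_smul, dotProduct_sub,
      sub_dotProduct, single_dotProduct, col_apply, one_mul]
    ring
  have hnorm : e ⬝ᵥ e = 2 := by
    norm_num [e, dotProduct_sub, hij, hij.symm]
  have hsymm : A j i = A i j := hA.apply i j
  have := hA.mul_dotProduct_self_le hc e
  rw [hform, hnorm, hsymm] at this
  linarith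

theorem dotProduct_mulVec_le_of_card_support_le {A : Matrix n n ℝ} {c : ℝ} {k : ℕ}
    (hdiag : ∀ i, A i i = 0) (hoff : ∀ i j, i ≠ j → A i j ≤ c) (hc : 0 ≤ c)
    {x : n → ℝ} (hx : 0 ≤ x) (hk : #{i | x i ≠ 0} ≤ k + 1) :
    x ⬝ᵥ (A *ᵥ x) ≤ c * k * (x ⬝ᵥ x) := by
  classical
  have hterm : ∀ i j, x i * (A i j * x j) ≤
      c * (x i * x j) - if i = j then c * (x i * x j) else 0 := by
    intro i j
    split_ifs with hij
    · simp [hij, hdiag]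
    · nlinarith [hoff i j hij, mul_nonneg (hx i) (hx j)]
  have hcs : (∑ i, x i) ^ 2 ≤ (k + 1) * ∑ i, x i ^ 2 := by
    have hS : ∑ i, x i = ∑ i with x i ≠ 0, x i := (sum_filter_ne_zero _).symm
    have hQ : ∑ i, x i ^ 2 = ∑ i with x i ≠ 0, x i ^ 2 :=
      (sum_filter_of_ne fun i _ h => by simpa using h).symm
    rw [hS, hQ]
    calc _ ≤ (#{i | x i ≠ 0} : ℝ) * ∑ i with x i ≠ 0, x i ^ 2 := sq_sum_le_card_mul_sum_sq
      _ ≤ _ := by gcongr; exact_mod_cast hk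
  calc x ⬝ᵥ (A *ᵥ x) = ∑ i, ∑ j, x i * (A i j * x j) := by simp [dotProduct, mulVec, mul_sum]
    _ ≤ ∑ i, ∑ j, (c * (x i * x j) - if i = j then c * (x i * x j) else 0) :=
      sum_le_sum fun i _ => sum_le_sum fun j _ => hterm i j
    _ = c * ((∑ i, x i) ^ 2 - ∑ i, x i ^ 2) := by
      simp only [sum_sub_distrib, ← mul_sum, sum_ite_eq, mem_univ, ↓reduceIte, sq, sum_mul_sum]
      ring
    _ ≤ c * k * ∑ i, x i ^ 2 := by nlinarith
    _ = c * k * (x ⬝ᵥ x) := by simp [dotProduct, sq]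

theorem le_of_smul_le_mulVec_of_card_support_le {A : Matrix n n ℝ} {c : ℝ} {k : ℕ}
    (hdiag : ∀ i, A i i = 0) (hoff : ∀ i j, i ≠ j → A i j ≤ c) (hc : 0 ≤ c)
    {x : n → ℝ} (hx : 0 ≤ x) (hx0 : x ≠ 0) (hk : #{i | x i ≠ 0} ≤ k + 1) {μ : ℝ}
    (h : μ • x ≤ A *ᵥ x) : μ ≤ c * k := by
  have hpos : 0 < x ⬝ᵥ x := lt_of_le_of_ne (dotProduct_nonneg_of_nonneg hx hx)
    (Ne.symm (dotProduct_self_eq_zero.not.mpr hx0))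
  refine le_of_mul_le_mul_right ?_ hpos
  calc μ * (x ⬝ᵥ x) = x ⬝ᵥ (μ • x) := by rw [dotProduct_smul, smul_eq_mul]
    _ ≤ x ⬝ᵥ (A *ᵥ x) := dotProduct_le_dotProduct_of_nonneg_left h hx
    _ ≤ c * k * (x ⬝ᵥ x) := dotProduct_mulVec_le_of_card_support_le hdiag hoff hc hx hk

theorem smul_posPart_le_mulVec_posPart {A : Matrix n n ℝ} (hA : ∀ i j, 0 ≤ A i j) {μ : ℝ}
    {v : n → ℝ} (hv : A *ᵥ v = μ • v) : μ • v⁺ ≤ A *ᵥ v⁺ := by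
  intro i
  have hmono : (A *ᵥ v) i ≤ (A *ᵥ v⁺) i :=
    sum_le_sum fun j _ => mul_le_mul_of_nonneg_left (le_posPart (v j)) (hA i j)
  rcases le_or_gt (v i) 0 with hi | hi
  · simpa [posPart_eq_zero.mpr hi, mulVec, dotProduct] using
      sum_nonneg fun j _ => mul_nonneg (hA i j) (posPart_nonneg (v j))
  · simpa [posPart_eq_self.mpr hi.le, hv] using hmono

theorem card_support_add_card_support_le {x y : n → ℝ} (h : ∀ i, x i * y i = 0) :
    #{i | x i ≠ 0} + #{i | y i ≠ 0} ≤ Fintype.card n := by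
  classical
  rw [← card_union_of_disjoint (disjoint_filter.mpr fun i _ hx hy => mul_ne_zero hx hy (h i))]
  exact card_le_univ _

theorem not_forall_mul_eq_zero_of_smul_le_mulVec {A : Matrix n n ℝ} {c : ℝ} {k : ℕ}
    (hdiag : ∀ i, A i i = 0) (hoff : ∀ i j, i ≠ j → A i j ≤ c) (hc : 0 ≤ c)
    (hn : Fintype.card n ≤ 2 * k + 3) {μ ν : ℝ} (hμ : c * k < μ) (hν : c * k < ν)
    {x y : n → ℝ} (hx : 0 ≤ x) (hx0 : x ≠ 0) (hy : 0 ≤ y) (hy0 : y ≠ 0)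
    (hAx : μ • x ≤ A *ᵥ x) (hAy : ν • y ≤ A *ᵥ y) : ¬ ∀ i, x i * y i = 0 := by
  intro h
  have hcard := card_support_add_card_support_le h
  rcases le_or_gt #{i | x i ≠ 0} (k + 1) with hxk | hxk
  · exact hμ.not_ge (le_of_smul_le_mulVec_of_card_support_le hdiag hoff hc hx hx0 hxk hAx)
  · exact hν.not_ge (le_of_smul_le_mulVec_of_card_support_le hdiag hoff hc hy hy0 (by omega) hAy)

theorem exists_nonneg_mulVec_eq_smul [DecidableEq n] {A : Matrix n n ℝ} {c : ℝ} {k : ℕ}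
    (hA : ∀ i j, 0 ≤ A i j) (hdiag : ∀ i, A i i = 0) (hoff : ∀ i j, i ≠ j → A i j ≤ c)
    (hc : 0 ≤ c) (hn : Fintype.card n ≤ 2 * k + 3) {μ : ℝ} (hμ : c * k < μ)
    (hμA : μ ∈ spectrum ℝ A) : ∃ u, 0 ≤ u ∧ u ≠ 0 ∧ A *ᵥ u = μ • u := by
  obtain ⟨v, hv0, hv⟩ := exists_mulVec_eq_smul_of_mem_spectrum hμA
  by_cases hpos : 0 ≤ v
  · exact ⟨v, hpos, hv0, hv⟩
  by_cases hneg : v ≤ 0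
  · exact ⟨-v, neg_nonneg.mpr hneg, neg_ne_zero.mpr hv0, by rw [mulVec_neg, hv, smul_neg]⟩
  have hv' : A *ᵥ -v = μ • -v := by rw [mulVec_neg, hv, smul_neg]
  refine (not_forall_mul_eq_zero_of_smul_le_mulVec hdiag hoff hc hn hμ hμ
    (posPart_nonneg v) (posPart_eq_zero.not.mpr hneg) (posPart_nonneg (-v))
    (posPart_eq_zero.not.mpr (by simpa using hpos)) (smul_posPart_le_mulVec_posPart hA hv)
    (smul_posPart_le_mulVec_posPart hA hv') fun i => ?_).elim
  rcases le_total (v i) 0 with hi | hi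
  · simp [posPart_eq_zero.mpr hi]
  · simp [posPart_eq_zero.mpr (neg_nonpos.mpr hi)]

end Matrix

theorem symmetric_realizable_perturbed_implies_t_ge (t : ℝ) (ht : 0 < t)
    (h : ∃ A : Matrix (Fin 5) (Fin 5) ℝ,
        A.IsSymm ∧ (∀ i j, 0 ≤ A i j) ∧
        A.charpoly = (X - C (3 + t)) * (X - C (3 - t)) *
          (X + C (19 / 10)) * (X + C 2) * (X + C (21 / 10))) :
    9 / 10 ≤ t := by
  obtain ⟨A, hsym, hA, hcp⟩ := h
  by_contra! ht9
  have hspec : ∀ μ, μ ∈ spectrum ℝ A ↔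
      μ = 3 + t ∨ μ = 3 - t ∨ μ = -(19 / 10) ∨ μ = -2 ∨ μ = -(21 / 10) := by
    intro μ
    rw [mem_spectrum_iff_isRoot_charpoly, hcp]
    simp [sub_eq_zero, add_eq_zero_iff_eq_neg, or_assoc]
  have htrace : A.trace = 0 := by
    rw [trace_eq_neg_charpoly_nextCoeff, hcp]
    repeat rw [Monic.nextCoeff_mul (by monicity!) (by monicity!)]
    simp only [nextCoeff_X_sub_C, nextCoeff_X_add_C]
    ring
  have hdiag : ∀ i, A i i = 0 := fun i =>
    (sum_eq_zero_iff_of_nonneg fun j _ => hA j j).mp htrace i (mem_univ i)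
  have hlow : ∀ μ ∈ spectrum ℝ A, -(21 / 10) ≤ μ := fun μ hμ => by
    rcases (hspec μ).mp hμ with h | h | h | h | h <;> linarith
  have hoff : ∀ i j, i ≠ j → A i j ≤ 21 / 10 := fun i j hij => by
    have := (isHermitian_iff_isSymm.mpr hsym).two_mul_apply_le hlow hij
    rw [hdiag, hdiag] at this
    linarith
  have hμ : 21 / 10 * ((1 : ℕ) : ℝ) < 3 - t := by rw [Nat.cast_one]; linarith
  have hν : 21 / 10 * ((1 : ℕ) : ℝ) < 3 + t := by rw [Nat.cast_one]; linarith
  obtain ⟨v, hv, hv0, hAv⟩ :=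
    exists_nonneg_mulVec_eq_smul hA hdiag hoff (by norm_num) le_rfl hμ ((hspec _).mpr (by simp))
  obtain ⟨w, hw, hw0, hAw⟩ :=
    exists_nonneg_mulVec_eq_smul hA hdiag hoff (by norm_num) le_rfl hν ((hspec _).mpr (by simp))
  have horth := hsym.dotProduct_eq_zero_of_mulVec_eq_smul (by linarith) hAv hAw
  refine not_forall_mul_eq_zero_of_smul_le_mulVec hdiag hoff (by norm_num) le_rfl hμ hν
    hv hv0 hw hw0 hAv.ge hAw.ge fun i => ?_
  exact (sum_eq_zero_iff_of_nonneg fun j _ => mul_nonneg (hv j) (hw j)).mp horth i (mem_univ i)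
end

section
/- If the list (3+t, 3−t, −2, −2, −2) with t > 0 is the spectrum of a diagonalizable entrywise nonnegative 5×5 real matrix A, then t ≥ 1. -/
open Polynomial

set_option maxRecDepth 8000
set_option maxHeartbeats 4000000

lemma charpoly_conj (P M : Matrix (Fin 5) (Fin 5) ℝ) (hP : IsUnit P) :
    (P * M * P⁻¹).charpoly = M.charpoly := by
  have hd : IsUnit P.det := (Matrix.isUnit_iff_isUnit_det _).mp hP
  have h1 : P * P⁻¹ = 1 := Matrix.mul_nonsing_inv _ hd
  have hcm : Matrix.charmatrix (P * M * P⁻¹) =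
      (C : ℝ →+* ℝ[X]).mapMatrix P * Matrix.charmatrix M * (C : ℝ →+* ℝ[X]).mapMatrix P⁻¹ := by
    unfold Matrix.charmatrix
    rw [mul_sub, sub_mul, _root_.map_mul, _root_.map_mul]
    congr 1
    rw [Matrix.scalar_apply]
    rw [← Matrix.smul_one_eq_diagonal, mul_smul_comm, smul_mul_assoc, mul_one,
      ← _root_.map_mul, h1, _root_.map_one]
  unfold Matrix.charpoly
  rw [hcm, Matrix.det_mul, Matrix.det_mul]
  have h2 : ((C : ℝ →+* ℝ[X]).mapMatrix P).det * ((C : ℝ →+* ℝ[X]).mapMatrix P⁻¹).det = 1 := by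
    rw [← Matrix.det_mul, ← _root_.map_mul, h1]
    simp
  calc ((C : ℝ →+* ℝ[X]).mapMatrix P).det * (Matrix.charmatrix M).det *
        ((C : ℝ →+* ℝ[X]).mapMatrix P⁻¹).det
      = (Matrix.charmatrix M).det * (((C : ℝ →+* ℝ[X]).mapMatrix P).det *
        ((C : ℝ →+* ℝ[X]).mapMatrix P⁻¹).det) := by ring
    _ = (Matrix.charmatrix M).det := by rw [h2, mul_one]

lemma charpoly_diagonal (d : Fin 5 → ℝ) :
    (Matrix.diagonal d).charpoly = ∏ i, (X - C (d i)) := by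
  have h : Matrix.charmatrix (Matrix.diagonal d) = Matrix.diagonal (fun i => X - C (d i)) := by
    ext i j
    by_cases h : i = j
    · subst h; simp
    · simp [Matrix.charmatrix_apply_ne _ _ _ h, Matrix.diagonal_apply_ne _ h]
  unfold Matrix.charpoly
  rw [h, Matrix.det_diagonal]

lemma multiset_of_charpoly (t : ℝ) (d : Fin 5 → ℝ)
    (h : ∏ i, (X - C (d i)) = (X - C (3 + t)) * (X - C (3 - t)) * (X + C 2) ^ 3) :
    (Finset.univ.val.map d : Multiset ℝ) =
      (3 + t) ::ₘ (3 - t) ::ₘ (-2) ::ₘ (-2) ::ₘ (-2) ::ₘ 0 := by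
  have hprod : ∏ i, (X - C (d i)) =
      ((Finset.univ.val.map d).map (fun a => X - C a)).prod := by
    rw [Multiset.map_map]
    rfl
  have hL : (∏ i, (X - C (d i))).roots = Finset.univ.val.map d := by
    rw [hprod, Polynomial.roots_multiset_prod_X_sub_C]
  have h2 : (X + C 2 : ℝ[X]) = X - C (-2) := by
    rw [map_neg, sub_neg_eq_add]
  rw [h, h2] at hL
  have m1 : ((X - C (3 + t)) * (X - C (3 - t)) : ℝ[X]).Monic :=
    (monic_X_sub_C _).mul (monic_X_sub_C _)
  have m2 : (((X - C (-2)) ^ 3 : ℝ[X])).Monic := (monic_X_sub_C _).pow 3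
  rw [Polynomial.roots_mul (by exact (m1.mul m2).ne_zero),
      Polynomial.roots_mul (by exact m1.ne_zero),
      Polynomial.roots_pow, Polynomial.roots_X_sub_C, Polynomial.roots_X_sub_C,
      Polynomial.roots_X_sub_C, Multiset.nsmul_singleton] at hL
  rw [← hL]
  rfl

lemma det3_eq_zero {B : Matrix (Fin 5) (Fin 5) ℝ} (hB : B.rank ≤ 2) (f : Fin 3 → Fin 5) :
    (Matrix.of fun a b => B (f a) (f b)).det = 0 := by
  set Q : Matrix (Fin 3) (Fin 5) ℝ := Matrix.of fun a l => if l = f a then 1 else 0 with hQ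
  set R : Matrix (Fin 5) (Fin 3) ℝ := Matrix.of fun l b => if l = f b then 1 else 0 with hR
  have hS : (Matrix.of fun a b => B (f a) (f b)) = Q * B * R := by
    ext a b
    simp [Matrix.mul_apply, hQ, hR, ite_mul, mul_ite, Finset.sum_ite_eq']
  have hrank : (Matrix.of fun a b => B (f a) (f b)).rank ≤ 2 := by
    rw [hS]
    exact le_trans (le_trans (Matrix.rank_mul_le_left _ _)
      (Matrix.rank_mul_le_right _ _)) hB
  by_contra hdet
  have hu : IsUnit (Matrix.of fun a b => B (f a) (f b)) :=
    (Matrix.isUnit_iff_isUnit_det _).mpr (isUnit_iff_ne_zero.mpr hdet)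
  have := Matrix.rank_of_isUnit _ hu
  rw [this] at hrank
  simp at hrank

lemma triple_con (A : Matrix (Fin 5) (Fin 5) ℝ) (hnn : ∀ i j, 0 ≤ A i j)
    (hdiag : ∀ i, A i i = 0)
    (hrank : (A + Matrix.diagonal (fun _ => (2:ℝ))).rank ≤ 2)
    (i j k : Fin 5) (hij : i ≠ j) (hik : i ≠ k) (hjk : j ≠ k) :
    4 ≤ A i j * A j i + A i k * A k i + A j k * A k j ∧
    (A i j * A j i) * (A i k * A k i) * (A j k * A k j)
      ≤ (A i j * A j i + A i k * A k i + A j k * A k j - 4)^2 := by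
  have hdet := det3_eq_zero hrank ![i, j, k]
  rw [Matrix.det_fin_three] at hdet
  simp only [Matrix.of_apply, Matrix.cons_val', Matrix.cons_val_zero, Matrix.cons_val_one,
    Matrix.head_cons, Matrix.cons_val_two, Matrix.tail_cons, Matrix.empty_val',
    Matrix.cons_val_fin_one, Matrix.head_fin_const] at hdet
  have ea : ∀ a b : Fin 5, a ≠ b →
      ((A + Matrix.diagonal (fun _ => (2:ℝ))) : Matrix (Fin 5) (Fin 5) ℝ) a b = A a b := by
    intro a b hab
    simp [Matrix.add_apply, Matrix.diagonal_apply_ne _ hab]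
  have ed : ∀ a : Fin 5, ((A + Matrix.diagonal (fun _ => (2:ℝ))) : Matrix (Fin 5) (Fin 5) ℝ) a a = 2 := by
    intro a
    simp [Matrix.add_apply, hdiag a]
  rw [ed i, ed j, ed k, ea i j hij, ea j i hij.symm, ea i k hik, ea k i hik.symm,
    ea j k hjk, ea k j hjk.symm] at hdet
  have hc : 0 ≤ A i j * A j k * A k i ∧ 0 ≤ A i k * A k j * A j i :=
    ⟨mul_nonneg (mul_nonneg (hnn i j) (hnn j k)) (hnn k i), mul_nonneg (mul_nonneg (hnn i k) (hnn k j)) (hnn j i)⟩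
  obtain ⟨hx, hy⟩ := hc
  constructor
  · nlinarith [hdet, hx, hy]
  · nlinarith [hdet, hx, hy, sq_nonneg (A i j * A j k * A k i - A i k * A k j * A j i)]

lemma pair_ge (p q r : ℝ) (h0 : 0 ≤ r) (hp : r ≤ p) (hq : r ≤ q)
    (h4 : 4 ≤ p + q + r) (hsq : p * q * r ≤ (p + q + r - 4) ^ 2) : 4 ≤ p + q := by
  by_contra hlt
  push_neg at hlt
  rcases eq_or_lt_of_le h0 with h | hr
  · linarith
  have h1 : p + q + r - 4 < r := by linarith
  have h2 : (p + q + r - 4) ^ 2 < r ^ 2 := by nlinarith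
  have h3 : p * q < r := by nlinarith
  have hq1 : q < 1 := by nlinarith
  have hp1 : p < 1 := by nlinarith
  linarith

lemma tri_first (a b c : ℝ) (h0 : 0 ≤ a) (h1 : a ≤ b) (h2 : a ≤ c)
    (hc : 4 ≤ a + b + c ∧ a * b * c ≤ (a + b + c - 4) ^ 2) : 4 ≤ b + c := by
  refine pair_ge b c a h0 h1 h2 (by linarith [hc.1]) ?_
  calc b * c * a = a * b * c := by ring
    _ ≤ (a + b + c - 4) ^ 2 := hc.2
    _ = (b + c + a - 4) ^ 2 := by ring

lemma tri_mid (a b c : ℝ) (h0 : 0 ≤ b) (h1 : b ≤ a) (h2 : b ≤ c)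
    (hc : 4 ≤ a + b + c ∧ a * b * c ≤ (a + b + c - 4) ^ 2) : 4 ≤ a + c := by
  refine pair_ge a c b h0 h1 h2 (by linarith [hc.1]) ?_
  calc a * c * b = a * b * c := by ring
    _ ≤ (a + b + c - 4) ^ 2 := hc.2
    _ = (a + c + b - 4) ^ 2 := by ring

lemma tri_last (a b c : ℝ) (h0 : 0 ≤ c) (h1 : c ≤ a) (h2 : c ≤ b)
    (hc : 4 ≤ a + b + c ∧ a * b * c ≤ (a + b + c - 4) ^ 2) : 4 ≤ a + b := by
  refine pair_ge a b c h0 h1 h2 (by linarith [hc.1]) ?_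
  calc a * b * c = a * b * c := by ring
    _ ≤ (a + b + c - 4) ^ 2 := hc.2
    _ = (a + b + c - 4) ^ 2 := by ring

lemma assemble (q01 q02 q03 q04 q12 q13 q14 q23 q24 q34 : ℝ)
    (hn01 : 0 ≤ q01) (hn02 : 0 ≤ q02) (hn03 : 0 ≤ q03) (hn04 : 0 ≤ q04) (hn12 : 0 ≤ q12) (hn13 : 0 ≤ q13) (hn14 : 0 ≤ q14) (hn23 : 0 ≤ q23) (hn24 : 0 ≤ q24) (hn34 : 0 ≤ q34)
        (h012 : 4 ≤ q01 + q02 + q12 ∧ q01 * q02 * q12 ≤ (q01 + q02 + q12 - 4) ^ 2)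
    (h013 : 4 ≤ q01 + q03 + q13 ∧ q01 * q03 * q13 ≤ (q01 + q03 + q13 - 4) ^ 2)
    (h014 : 4 ≤ q01 + q04 + q14 ∧ q01 * q04 * q14 ≤ (q01 + q04 + q14 - 4) ^ 2)
    (h023 : 4 ≤ q02 + q03 + q23 ∧ q02 * q03 * q23 ≤ (q02 + q03 + q23 - 4) ^ 2)
    (h024 : 4 ≤ q02 + q04 + q24 ∧ q02 * q04 * q24 ≤ (q02 + q04 + q24 - 4) ^ 2)
    (h034 : 4 ≤ q03 + q04 + q34 ∧ q03 * q04 * q34 ≤ (q03 + q04 + q34 - 4) ^ 2)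
    (h123 : 4 ≤ q12 + q13 + q23 ∧ q12 * q13 * q23 ≤ (q12 + q13 + q23 - 4) ^ 2)
    (h124 : 4 ≤ q12 + q14 + q24 ∧ q12 * q14 * q24 ≤ (q12 + q14 + q24 - 4) ^ 2)
    (h134 : 4 ≤ q13 + q14 + q34 ∧ q13 * q14 * q34 ≤ (q13 + q14 + q34 - 4) ^ 2)
    (h234 : 4 ≤ q23 + q24 + q34 ∧ q23 * q24 * q34 ≤ (q23 + q24 + q34 - 4) ^ 2) :
    16 ≤ q01 + q02 + q03 + q04 + q12 + q13 + q14 + q23 + q24 + q34 := by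
  obtain ⟨i, -, hmin⟩ := Finset.exists_min_image (Finset.univ : Finset (Fin 10))
    (![q01, q02, q03, q04, q12, q13, q14, q23, q24, q34]) ⟨0, Finset.mem_univ 0⟩
  fin_cases i
  · -- min is q01
    have c02 : q01 ≤ q02 := by simpa using hmin 1 (Finset.mem_univ _)
    have c12 : q01 ≤ q12 := by simpa using hmin 4 (Finset.mem_univ _)
    have c03 : q01 ≤ q03 := by simpa using hmin 2 (Finset.mem_univ _)
    have c13 : q01 ≤ q13 := by simpa using hmin 5 (Finset.mem_univ _)
    have c04 : q01 ≤ q04 := by simpa using hmin 3 (Finset.mem_univ _)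
    have c14 : q01 ≤ q14 := by simpa using hmin 6 (Finset.mem_univ _)
    have p0212 : 4 ≤ q02 + q12 := tri_first q01 q02 q12 hn01 c02 c12 h012
    have p0313 : 4 ≤ q03 + q13 := tri_first q01 q03 q13 hn01 c03 c13 h013
    have p0414 : 4 ≤ q04 + q14 := tri_first q01 q04 q14 hn01 c04 c14 h014
    linarith [h234.1, hn01]
  · -- min is q02
    have c01 : q02 ≤ q01 := by simpa using hmin 0 (Finset.mem_univ _)
    have c12 : q02 ≤ q12 := by simpa using hmin 4 (Finset.mem_univ _)
    have c03 : q02 ≤ q03 := by simpa using hmin 2 (Finset.mem_univ _)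
    have c23 : q02 ≤ q23 := by simpa using hmin 7 (Finset.mem_univ _)
    have c04 : q02 ≤ q04 := by simpa using hmin 3 (Finset.mem_univ _)
    have c24 : q02 ≤ q24 := by simpa using hmin 8 (Finset.mem_univ _)
    have p0112 : 4 ≤ q01 + q12 := tri_mid q01 q02 q12 hn02 c01 c12 h012
    have p0323 : 4 ≤ q03 + q23 := tri_first q02 q03 q23 hn02 c03 c23 h023
    have p0424 : 4 ≤ q04 + q24 := tri_first q02 q04 q24 hn02 c04 c24 h024
    linarith [h134.1, hn02]
  · -- min is q03
    have c01 : q03 ≤ q01 := by simpa using hmin 0 (Finset.mem_univ _)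
    have c13 : q03 ≤ q13 := by simpa using hmin 5 (Finset.mem_univ _)
    have c02 : q03 ≤ q02 := by simpa using hmin 1 (Finset.mem_univ _)
    have c23 : q03 ≤ q23 := by simpa using hmin 7 (Finset.mem_univ _)
    have c04 : q03 ≤ q04 := by simpa using hmin 3 (Finset.mem_univ _)
    have c34 : q03 ≤ q34 := by simpa using hmin 9 (Finset.mem_univ _)
    have p0113 : 4 ≤ q01 + q13 := tri_mid q01 q03 q13 hn03 c01 c13 h013
    have p0223 : 4 ≤ q02 + q23 := tri_mid q02 q03 q23 hn03 c02 c23 h023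
    have p0434 : 4 ≤ q04 + q34 := tri_first q03 q04 q34 hn03 c04 c34 h034
    linarith [h124.1, hn03]
  · -- min is q04
    have c01 : q04 ≤ q01 := by simpa using hmin 0 (Finset.mem_univ _)
    have c14 : q04 ≤ q14 := by simpa using hmin 6 (Finset.mem_univ _)
    have c02 : q04 ≤ q02 := by simpa using hmin 1 (Finset.mem_univ _)
    have c24 : q04 ≤ q24 := by simpa using hmin 8 (Finset.mem_univ _)
    have c03 : q04 ≤ q03 := by simpa using hmin 2 (Finset.mem_univ _)
    have c34 : q04 ≤ q34 := by simpa using hmin 9 (Finset.mem_univ _)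
    have p0114 : 4 ≤ q01 + q14 := tri_mid q01 q04 q14 hn04 c01 c14 h014
    have p0224 : 4 ≤ q02 + q24 := tri_mid q02 q04 q24 hn04 c02 c24 h024
    have p0334 : 4 ≤ q03 + q34 := tri_mid q03 q04 q34 hn04 c03 c34 h034
    linarith [h123.1, hn04]
  · -- min is q12
    have c01 : q12 ≤ q01 := by simpa using hmin 0 (Finset.mem_univ _)
    have c02 : q12 ≤ q02 := by simpa using hmin 1 (Finset.mem_univ _)
    have c13 : q12 ≤ q13 := by simpa using hmin 5 (Finset.mem_univ _)
    have c23 : q12 ≤ q23 := by simpa using hmin 7 (Finset.mem_univ _)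
    have c14 : q12 ≤ q14 := by simpa using hmin 6 (Finset.mem_univ _)
    have c24 : q12 ≤ q24 := by simpa using hmin 8 (Finset.mem_univ _)
    have p0102 : 4 ≤ q01 + q02 := tri_last q01 q02 q12 hn12 c01 c02 h012
    have p1323 : 4 ≤ q13 + q23 := tri_first q12 q13 q23 hn12 c13 c23 h123
    have p1424 : 4 ≤ q14 + q24 := tri_first q12 q14 q24 hn12 c14 c24 h124
    linarith [h034.1, hn12]
  · -- min is q13
    have c01 : q13 ≤ q01 := by simpa using hmin 0 (Finset.mem_univ _)
    have c03 : q13 ≤ q03 := by simpa using hmin 2 (Finset.mem_univ _)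
    have c12 : q13 ≤ q12 := by simpa using hmin 4 (Finset.mem_univ _)
    have c23 : q13 ≤ q23 := by simpa using hmin 7 (Finset.mem_univ _)
    have c14 : q13 ≤ q14 := by simpa using hmin 6 (Finset.mem_univ _)
    have c34 : q13 ≤ q34 := by simpa using hmin 9 (Finset.mem_univ _)
    have p0103 : 4 ≤ q01 + q03 := tri_last q01 q03 q13 hn13 c01 c03 h013
    have p1223 : 4 ≤ q12 + q23 := tri_mid q12 q13 q23 hn13 c12 c23 h123
    have p1434 : 4 ≤ q14 + q34 := tri_first q13 q14 q34 hn13 c14 c34 h134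
    linarith [h024.1, hn13]
  · -- min is q14
    have c01 : q14 ≤ q01 := by simpa using hmin 0 (Finset.mem_univ _)
    have c04 : q14 ≤ q04 := by simpa using hmin 3 (Finset.mem_univ _)
    have c12 : q14 ≤ q12 := by simpa using hmin 4 (Finset.mem_univ _)
    have c24 : q14 ≤ q24 := by simpa using hmin 8 (Finset.mem_univ _)
    have c13 : q14 ≤ q13 := by simpa using hmin 5 (Finset.mem_univ _)
    have c34 : q14 ≤ q34 := by simpa using hmin 9 (Finset.mem_univ _)
    have p0104 : 4 ≤ q01 + q04 := tri_last q01 q04 q14 hn14 c01 c04 h014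
    have p1224 : 4 ≤ q12 + q24 := tri_mid q12 q14 q24 hn14 c12 c24 h124
    have p1334 : 4 ≤ q13 + q34 := tri_mid q13 q14 q34 hn14 c13 c34 h134
    linarith [h023.1, hn14]
  · -- min is q23
    have c02 : q23 ≤ q02 := by simpa using hmin 1 (Finset.mem_univ _)
    have c03 : q23 ≤ q03 := by simpa using hmin 2 (Finset.mem_univ _)
    have c12 : q23 ≤ q12 := by simpa using hmin 4 (Finset.mem_univ _)
    have c13 : q23 ≤ q13 := by simpa using hmin 5 (Finset.mem_univ _)
    have c24 : q23 ≤ q24 := by simpa using hmin 8 (Finset.mem_univ _)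
    have c34 : q23 ≤ q34 := by simpa using hmin 9 (Finset.mem_univ _)
    have p0203 : 4 ≤ q02 + q03 := tri_last q02 q03 q23 hn23 c02 c03 h023
    have p1213 : 4 ≤ q12 + q13 := tri_last q12 q13 q23 hn23 c12 c13 h123
    have p2434 : 4 ≤ q24 + q34 := tri_first q23 q24 q34 hn23 c24 c34 h234
    linarith [h014.1, hn23]
  · -- min is q24
    have c02 : q24 ≤ q02 := by simpa using hmin 1 (Finset.mem_univ _)
    have c04 : q24 ≤ q04 := by simpa using hmin 3 (Finset.mem_univ _)
    have c12 : q24 ≤ q12 := by simpa using hmin 4 (Finset.mem_univ _)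
    have c14 : q24 ≤ q14 := by simpa using hmin 6 (Finset.mem_univ _)
    have c23 : q24 ≤ q23 := by simpa using hmin 7 (Finset.mem_univ _)
    have c34 : q24 ≤ q34 := by simpa using hmin 9 (Finset.mem_univ _)
    have p0204 : 4 ≤ q02 + q04 := tri_last q02 q04 q24 hn24 c02 c04 h024
    have p1214 : 4 ≤ q12 + q14 := tri_last q12 q14 q24 hn24 c12 c14 h124
    have p2334 : 4 ≤ q23 + q34 := tri_mid q23 q24 q34 hn24 c23 c34 h234
    linarith [h013.1, hn24]
  · -- min is q34
    have c03 : q34 ≤ q03 := by simpa using hmin 2 (Finset.mem_univ _)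
    have c04 : q34 ≤ q04 := by simpa using hmin 3 (Finset.mem_univ _)
    have c13 : q34 ≤ q13 := by simpa using hmin 5 (Finset.mem_univ _)
    have c14 : q34 ≤ q14 := by simpa using hmin 6 (Finset.mem_univ _)
    have c23 : q34 ≤ q23 := by simpa using hmin 7 (Finset.mem_univ _)
    have c24 : q34 ≤ q24 := by simpa using hmin 8 (Finset.mem_univ _)
    have p0304 : 4 ≤ q03 + q04 := tri_last q03 q04 q34 hn34 c03 c04 h034
    have p1314 : 4 ≤ q13 + q14 := tri_last q13 q14 q34 hn34 c13 c14 h134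
    have p2324 : 4 ≤ q23 + q24 := tri_last q23 q24 q34 hn34 c23 c24 h234
    linarith [h012.1, hn34]


theorem diagonalizable_realizable_hat_sigma_implies_t_ge_one (t : ℝ) (ht : 0 < t)
    (h : ∃ A : Matrix (Fin 5) (Fin 5) ℝ,
        (∀ i j, 0 ≤ A i j) ∧
        (∃ (P : Matrix (Fin 5) (Fin 5) ℝ) (d : Fin 5 → ℝ),
          IsUnit P ∧ A = P * Matrix.diagonal d * P⁻¹) ∧
        A.charpoly = (X - C (3 + t)) * (X - C (3 - t)) * (X + C 2) ^ 3) :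
    1 ≤ t := by
  obtain ⟨A, hnn, ⟨P, d, hP, hA⟩, hchar⟩ := h
  have hd : IsUnit P.det := (Matrix.isUnit_iff_isUnit_det _).mp hP
  have h1 : P * P⁻¹ = 1 := Matrix.mul_nonsing_inv _ hd
  have h2 : P⁻¹ * P = 1 := Matrix.nonsing_inv_mul _ hd
  have hcp : ∏ i, (X - C (d i)) = (X - C (3 + t)) * (X - C (3 - t)) * (X + C 2) ^ 3 := by
    rw [← charpoly_diagonal d, ← charpoly_conj P (Matrix.diagonal d) hP, ← hA, hchar]
  have hm := multiset_of_charpoly t d hcp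
  -- sum of eigenvalues
  have hsum : ∑ i, d i = 0 := by
    have e1 : ∑ i, d i = (Finset.univ.val.map d).sum := rfl
    rw [e1, hm]
    simp
    ring
  have hsumsq : ∑ i, (d i)^2 = 30 + 2*t^2 := by
    have e1 : ∑ i, (d i)^2 = ((Finset.univ.val.map d).map (fun x => x^2)).sum := by
      rw [Multiset.map_map]; rfl
    rw [e1, hm]
    simp
    ring
  have hcard : Fintype.card {i // d i + 2 ≠ 0} ≤ 2 := by
    have hcount : Multiset.count (-2 : ℝ) (Finset.univ.val.map d) ≥ 3 := by
      rw [hm]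
      simp [Multiset.count_cons]
      split_ifs <;> omega
    rw [Multiset.count_map] at hcount
    have hc2 : (Finset.univ.filter (fun i => (-2:ℝ) = d i)).card ≥ 3 := hcount
    have hsplit := Finset.card_filter_add_card_filter_not
      (s := (Finset.univ : Finset (Fin 5))) (p := fun i => (-2:ℝ) = d i)
    have hcardeq : Fintype.card {i // d i + 2 ≠ 0} =
        (Finset.univ.filter (fun i => ¬ ((-2:ℝ) = d i))).card := by
      rw [Fintype.card_subtype]
      congr 1
      apply Finset.filter_congr
      intro i _
      constructor
      · intro hne heq; exact hne (by linarith)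
      · intro hne heq; exact hne (by linarith)
    simp only [Finset.card_univ, Fintype.card_fin] at hsplit
    omega
  -- traces
  have htrA : Matrix.trace A = 0 := by
    rw [hA, Matrix.trace_mul_comm (P * Matrix.diagonal d) P⁻¹, ← Matrix.mul_assoc, h2,
      Matrix.one_mul, Matrix.trace_diagonal]
    exact hsum
  have htrAA : Matrix.trace (A * A) = 30 + 2*t^2 := by
    have hAA : A * A = P * Matrix.diagonal (fun i => d i * d i) * P⁻¹ := by
      rw [hA]
      calc P * Matrix.diagonal d * P⁻¹ * (P * Matrix.diagonal d * P⁻¹)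
          = P * Matrix.diagonal d * (P⁻¹ * P) * Matrix.diagonal d * P⁻¹ := by
            simp only [Matrix.mul_assoc]
        _ = P * (Matrix.diagonal d * Matrix.diagonal d) * P⁻¹ := by
            rw [h2]; simp only [Matrix.mul_assoc, Matrix.one_mul]
        _ = P * Matrix.diagonal (fun i => d i * d i) * P⁻¹ := by
            rw [Matrix.diagonal_mul_diagonal]
    rw [hAA, Matrix.trace_mul_comm (P * Matrix.diagonal _) P⁻¹, ← Matrix.mul_assoc, h2,
      Matrix.one_mul, Matrix.trace_diagonal]
    rw [← hsumsq]
    exact Finset.sum_congr rfl fun i _ => by ring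
  -- rank bound
  have hrank : (A + Matrix.diagonal (fun _ => (2:ℝ))).rank ≤ 2 := by
    have hB : A + Matrix.diagonal (fun _ => (2:ℝ))
        = P * Matrix.diagonal (fun i => d i + 2) * P⁻¹ := by
      have h3 : Matrix.diagonal (fun _ => (2:ℝ))
          = P * Matrix.diagonal (fun _ => (2:ℝ)) * P⁻¹ := by
        rw [← Matrix.smul_one_eq_diagonal, mul_smul_comm, smul_mul_assoc, mul_one, h1]
      rw [hA]
      nth_rewrite 1 [h3]
      rw [← Matrix.add_mul, ← Matrix.mul_add, Matrix.diagonal_add]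
    rw [hB]
    have r1 : (P * (Matrix.diagonal (fun i => d i + 2) * P⁻¹)).rank
        ≤ (Matrix.diagonal (fun i => d i + 2) * P⁻¹).rank := Matrix.rank_mul_le_right _ _
    have r2 : (Matrix.diagonal (fun i => d i + 2) * P⁻¹).rank
        ≤ (Matrix.diagonal (fun i => d i + 2)).rank := Matrix.rank_mul_le_left _ _
    have r3 : (Matrix.diagonal (fun i => d i + 2)).rank = Fintype.card {i // d i + 2 ≠ 0} :=
      Matrix.rank_diagonal _
    rw [Matrix.mul_assoc]
    omega
  -- zero diagonal
  have hdiag : ∀ i, A i i = 0 := by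
    have e1 : Matrix.trace A = ∑ i, A i i := rfl
    rw [e1] at htrA
    intro i
    exact (Finset.sum_eq_zero_iff_of_nonneg (fun j _ => hnn j j)).mp htrA i (Finset.mem_univ i)
  -- the sum identity
  have hexp : Matrix.trace (A*A) = ∑ i : Fin 5, ∑ j : Fin 5, A i j * A j i := by
    simp [Matrix.trace, Matrix.diag, Matrix.mul_apply]
  rw [hexp] at htrAA
  simp only [Fin.sum_univ_five] at htrAA
  rw [hdiag 0, hdiag 1, hdiag 2, hdiag 3, hdiag 4] at htrAA
  ring_nf at htrAA
  have h012 := triple_con A hnn hdiag hrank 0 1 2 (by decide) (by decide) (by decide)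
  have h013 := triple_con A hnn hdiag hrank 0 1 3 (by decide) (by decide) (by decide)
  have h014 := triple_con A hnn hdiag hrank 0 1 4 (by decide) (by decide) (by decide)
  have h023 := triple_con A hnn hdiag hrank 0 2 3 (by decide) (by decide) (by decide)
  have h024 := triple_con A hnn hdiag hrank 0 2 4 (by decide) (by decide) (by decide)
  have h034 := triple_con A hnn hdiag hrank 0 3 4 (by decide) (by decide) (by decide)
  have h123 := triple_con A hnn hdiag hrank 1 2 3 (by decide) (by decide) (by decide)
  have h124 := triple_con A hnn hdiag hrank 1 2 4 (by decide) (by decide) (by decide)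
  have h134 := triple_con A hnn hdiag hrank 1 3 4 (by decide) (by decide) (by decide)
  have h234 := triple_con A hnn hdiag hrank 2 3 4 (by decide) (by decide) (by decide)
  have hS : 16 ≤ (A 0 1 * A 1 0) + (A 0 2 * A 2 0) + (A 0 3 * A 3 0) + (A 0 4 * A 4 0) + (A 1 2 * A 2 1) + (A 1 3 * A 3 1) + (A 1 4 * A 4 1) + (A 2 3 * A 3 2) + (A 2 4 * A 4 2) + (A 3 4 * A 4 3) :=
    assemble (A 0 1 * A 1 0) (A 0 2 * A 2 0) (A 0 3 * A 3 0) (A 0 4 * A 4 0) (A 1 2 * A 2 1) (A 1 3 * A 3 1) (A 1 4 * A 4 1) (A 2 3 * A 3 2) (A 2 4 * A 4 2) (A 3 4 * A 4 3) (mul_nonneg (hnn 0 1) (hnn 1 0)) (mul_nonneg (hnn 0 2) (hnn 2 0)) (mul_nonneg (hnn 0 3) (hnn 3 0)) (mul_nonneg (hnn 0 4) (hnn 4 0)) (mul_nonneg (hnn 1 2) (hnn 2 1)) (mul_nonneg (hnn 1 3) (hnn 3 1)) (mul_nonneg (hnn 1 4) (hnn 4 1)) (mul_nonneg (hnn 2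 3) (hnn 3 2)) (mul_nonneg (hnn 2 4) (hnn 4 2)) (mul_nonneg (hnn 3 4) (hnn 4 3)) h012 h013 h014 h023 h024 h034 h123 h124 h134 h234
  have key : 30 + 2*t^2 = 2*((A 0 1 * A 1 0) + (A 0 2 * A 2 0) + (A 0 3 * A 3 0) + (A 0 4 * A 4 0) + (A 1 2 * A 2 1) + (A 1 3 * A 3 1) + (A 1 4 * A 4 1) + (A 2 3 * A 3 2) + (A 2 4 * A 4 2) + (A 3 4 * A 4 3)) := by linear_combination -htrAA
  have ht2 : 1 ≤ t^2 := by linarith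
  by_contra hlt
  push_neg at hlt
  nlinarith [ht2, ht, hlt]
end

section
/- The matrix A = (1/4)·[[0,8,1,0,0],[8,0,1,0,0],[75/2,75/2,0,1,0],[0,0,0,0,1],[829,829,256,110,0]] is entrywise nonnegative, has characteristic polynomial (x − 15/4)(x − 9/4)(x + 2)³, and its minimal polynomial is (x − 15/4)(x − 9/4)(x + 2)²; in particular A is not diagonalizable. -/
/-!
Direct computation shows that `(A - 15/4)(A - 9/4)(A + 2)²` vanishes while
`(A - 15/4)(A - 9/4)(A + 2)` does not, and eigenvectors for `15/4` and `9/4` show that neither of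
those factors can be dropped either; so this product is the minimal polynomial. It has degree 4,
so by Cayley–Hamilton the characteristic polynomial is the minimal one times a monic linear
factor, whose root is fixed by `trace A = 0`. A diagonalizable matrix has a squarefree minimal
polynomial, which the factor `(x + 2)²` rules out.
-/

open Polynomial Matrix

theorem minpoly_eq_of_splits {K A : Type*} [Field K] [Ring A] [Algebra K A] {x : A} {p : K[X]}
    (hmonic : p.Monic) (hsplits : p.Splits) (hp : aeval x p = 0)
    (hmin : ∀ a r, p = (X - C a) * r → aeval x r ≠ 0) : minpoly K x = p := by
  have hint : IsIntegral K x := ⟨p, hmonic, hp⟩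
  obtain ⟨s, hs⟩ := minpoly.dvd K x hp
  have hs_monic : s.Monic := (minpoly.monic hint).of_mul_monic_left (hs ▸ hmonic)
  by_contra hne
  have hs_deg : s.degree ≠ 0 := fun h ↦ hne <| by
    rw [hs, hs_monic.natDegree_eq_zero.mp (natDegree_eq_of_degree_eq_some h), mul_one]
  have hs_splits : s.Splits := hsplits.of_dvd hmonic.ne_zero (Dvd.intro_left _ hs.symm)
  obtain ⟨a, ha⟩ := hs_splits.exists_eval_eq_zero hs_deg
  obtain ⟨t, rfl⟩ := dvd_iff_isRoot.mpr ha
  exact hmin a (minpoly K x * t) (by rw [hs]; ring) (by simp)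

namespace Matrix

variable {n K : Type*} [Fintype n] [DecidableEq n] [Field K]

/-- The missing root is fixed by `M.trace = -M.charpoly.nextCoeff`, the sum of all roots. -/
theorem charpoly_eq_minpoly_mul_X_sub_C (M : Matrix n n K)
    (hdeg : (minpoly K M).natDegree + 1 = Fintype.card n) :
    M.charpoly = minpoly K M * (X - C (M.trace + (minpoly K M).nextCoeff)) := by
  have hm := minpoly.monic (Algebra.IsIntegral.isIntegral (R := K) M)
  obtain ⟨s, hs⟩ := M.minpoly_dvd_charpoly
  have hs_monic : s.Monic := hm.of_mul_monic_left (hs ▸ M.charpoly_monic)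
  have hs_deg : s.natDegree = 1 := by
    have := congrArg natDegree hs
    rw [charpoly_natDegree_eq_dim, hm.natDegree_mul hs_monic] at this
    omega
  have htrace : M.trace = -(minpoly K M).nextCoeff - s.coeff 0 := by
    rw [trace_eq_neg_charpoly_nextCoeff, hs, hm.nextCoeff_mul hs_monic, hs_monic.eq_X_add_C hs_deg,
      nextCoeff_X_add_C, coeff_add, coeff_X_zero, coeff_C_zero, zero_add]
    ring
  rw [hs, hs_monic.eq_X_add_C hs_deg, htrace, sub_eq_add_neg X, ← C_neg]
  ring_nf

theorem minpoly_conj {P : Matrix n n K} (hP : IsUnit P) (D : Matrix n n K) :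
    minpoly K (P * D * P⁻¹) = minpoly K D := by
  obtain ⟨u, rfl⟩ := hP
  convert minpoly.algEquiv_eq (MulSemiringAction.toAlgEquiv K _ (ConjAct.toConjAct u)) D using 2
  simp [ConjAct.units_smul_def, coe_units_inv]

theorem aeval_diagonal (d : n → K) (q : K[X]) :
    aeval (diagonal d) q = diagonal fun i ↦ q.eval (d i) := by
  change aeval (diagonalAlgHom K d) q = _
  rw [aeval_algHom_apply]
  exact congrArg diagonal (funext fun i ↦ aeval_fn_apply q d i)

theorem squarefree_minpoly_diagonal (d : n → K) : Squarefree (minpoly K (diagonal d)) := by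
  classical
  let q : K[X] := ∏ a ∈ Finset.univ.image d, (X - C a)
  have hq : aeval (diagonal d) q = 0 := by
    rw [aeval_diagonal, diagonal_eq_zero]
    ext i
    simpa [q, eval_prod, Finset.prod_eq_zero_iff] using ⟨i, sub_self _⟩
  refine (Squarefree.squarefree_of_dvd (minpoly.dvd K _ hq) ?_)
  exact (separable_prod_X_sub_C_iff' (f := id)).mpr (fun _ _ _ _ h ↦ h) |>.squarefree

theorem aeval_ne_zero_of_mulVec_eq_smul {M : Matrix n n K} {v : n → K} {μ : K} (hv : v ≠ 0)
    (hMv : M *ᵥ v = μ • v) {r : K[X]} (hr : r.eval μ ≠ 0) : aeval M r ≠ 0 := by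
  intro h
  have hrv := Module.End.aeval_apply_of_mem_apply_eq_smul (f := toLinAlgEquiv' M) (p := r)
    (by simpa using hMv)
  rw [aeval_algEquiv, AlgHom.comp_apply, h, map_zero] at hrv
  exact smul_ne_zero hr hv hrv.symm

end Matrix

namespace Realization

noncomputable def A : Matrix (Fin 5) (Fin 5) ℝ :=
  (1 / 4 : ℝ) • !![0, 8, 1, 0, 0;
                   8, 0, 1, 0, 0;
                   75 / 2, 75 / 2, 0, 1, 0;
                   0, 0, 0, 0, 1;
                   829, 829, 256, 110, 0]

theorem A_nonneg (i j : Fin 5) : 0 ≤ A i j := by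
  fin_cases i <;> fin_cases j <;> norm_num [A]

theorem trace_A : A.trace = 0 := by
  simp [A, trace, Fin.sum_univ_five]

theorem A_mulVec_eigenvector_fifteen_fourths :
    A *ᵥ ![1, 1, 7, 30, 450] = (15 / 4 : ℝ) • ![1, 1, 7, 30, 450] := by
  ext i; fin_cases i <;> norm_num [A, mulVec, dotProduct, Fin.sum_univ_succ]

theorem A_mulVec_eigenvector_nine_fourths :
    A *ᵥ ![1, 1, 1, -66, -594] = (9 / 4 : ℝ) • ![1, 1, 1, -66, -594] := by
  ext i; fin_cases i <;> norm_num [A, mulVec, dotProduct, Fin.sum_univ_succ]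

theorem aeval_A_simple_factors : aeval A ((X - C (15 / 4 : ℝ)) * (X - C (9 / 4))) =
    !![473/32, -(309/32), -1, 1/16, 0;
       -(309/32), 473/32, -1, 1/16, 0;
       -(75/2), -(75/2), 105/8, -(3/2), 1/16;
       829/16, 829/16, 16, 245/16, -(3/2);
       -229, -229, -(2243/8), -149, 245/16] := by
  simp only [map_mul, map_sub, aeval_X, aeval_C, Algebra.algebraMap_eq_smul_one]
  ext i j; fin_cases i <;> fin_cases j <;>
    simp [A, mul_apply, Fin.sum_univ_five, one_apply] <;> norm_num

theorem aeval_A_radical : aeval A ((X - C (15 / 4 : ℝ)) * (X - C (9 / 4)) * (X + C 2)) =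
    !![7/8, 7/8, -(23/32), -(1/8), 1/64;
       7/8, 7/8, -(23/32), -(1/8), 1/64;
       -14, -14, 23/2, 2, -(1/4);
       371/8, 371/8, -(1219/32), -(53/8), 53/64;
       -371, -371, 1219/4, 53, -(53/8)] := by
  rw [map_mul, aeval_A_simple_factors]
  simp only [map_add, aeval_X, aeval_C, Algebra.algebraMap_eq_smul_one]
  ext i j; fin_cases i <;> fin_cases j <;>
    simp [A, mul_apply, Fin.sum_univ_five, one_apply] <;> norm_num

theorem aeval_A_radical_mul_X_add_C :
    aeval A ((X - C (15 / 4 : ℝ)) * (X - C (9 / 4)) * (X + C 2) ^ 2) = 0 := by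
  rw [pow_two, ← mul_assoc, map_mul, aeval_A_radical]
  simp only [map_add, aeval_X, aeval_C, Algebra.algebraMap_eq_smul_one]
  ext i j; fin_cases i <;> fin_cases j <;>
    simp [A, mul_apply, Fin.sum_univ_five, one_apply] <;> norm_num

theorem minpoly_A : minpoly ℝ A = (X - C (15 / 4)) * (X - C (9 / 4)) * (X + C 2) ^ 2 := by
  refine minpoly_eq_of_splits (by monicity!)
    (((Splits.X_sub_C _).mul (Splits.X_sub_C _)).mul ((Splits.X_add_C _).pow 2))
    aeval_A_radical_mul_X_add_C fun a r hr ↦ ?_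
  have hroot : a = 15 / 4 ∨ a = 9 / 4 ∨ a = -2 := by
    have := congrArg (eval a) hr
    simp only [eval_mul, eval_sub, eval_add, eval_pow, eval_X, eval_C, sub_self, zero_mul,
      mul_eq_zero, pow_eq_zero_iff two_ne_zero, sub_eq_zero, add_eq_zero_iff_eq_neg] at this
    tauto
  rcases hroot with rfl | rfl | rfl
  · obtain rfl : r = (X - C (9 / 4)) * (X + C 2) ^ 2 :=
      mul_left_cancel₀ (X_sub_C_ne_zero _) (by rw [← hr]; ring)
    exact aeval_ne_zero_of_mulVec_eq_smul (by simp) A_mulVec_eigenvector_fifteen_fourths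
      (by norm_num)
  · obtain rfl : r = (X - C (15 / 4)) * (X + C 2) ^ 2 :=
      mul_left_cancel₀ (X_sub_C_ne_zero _) (by rw [← hr]; ring)
    exact aeval_ne_zero_of_mulVec_eq_smul (by simp) A_mulVec_eigenvector_nine_fourths
      (by norm_num)
  · obtain rfl : r = (X - C (15 / 4)) * (X - C (9 / 4)) * (X + C 2) :=
      mul_left_cancel₀ (X_sub_C_ne_zero _) (by rw [← hr, C_neg, sub_neg_eq_add]; ring)
    rw [aeval_A_radical]
    intro h
    simpa using congrFun (congrFun h 0) 0

theorem charpoly_A : A.charpoly = (X - C (15 / 4)) * (X - C (9 / 4)) * (X + C 2) ^ 3 := by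
  have hdeg : (minpoly ℝ A).natDegree = 4 := by
    rw [minpoly_A]; compute_degree!
  have hnext : (minpoly ℝ A).nextCoeff = -2 := by
    rw [minpoly_A, Monic.nextCoeff_mul (by monicity!) (by monicity!),
      Monic.nextCoeff_mul (monic_X_sub_C _) (monic_X_sub_C _),
      Monic.nextCoeff_pow (monic_X_add_C _), nextCoeff_X_sub_C, nextCoeff_X_sub_C,
      nextCoeff_X_add_C]
    norm_num
  rw [charpoly_eq_minpoly_mul_X_sub_C A (by simp [hdeg]), hnext, trace_A, minpoly_A, zero_add,
    C_neg, sub_neg_eq_add]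
  ring

theorem not_squarefree_minpoly_A : ¬ Squarefree (minpoly ℝ A) := by
  rw [minpoly_A]
  intro h
  refine not_isUnit_X_sub_C (-2 : ℝ) (h _ ⟨(X - C (15 / 4)) * (X - C (9 / 4)), ?_⟩)
  rw [C_neg, sub_neg_eq_add]
  ring

end Realization

theorem nondiagonalizable_realization :
    let A : Matrix (Fin 5) (Fin 5) ℝ :=
      (1 / 4 : ℝ) • !![0, 8, 1, 0, 0;
                       8, 0, 1, 0, 0;
                       75 / 2, 75 / 2, 0, 1, 0;
                       0, 0, 0, 0, 1;
                       829, 829, 256, 110, 0]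
    (∀ i j, 0 ≤ A i j) ∧
      A.charpoly = (X - C (15 / 4)) * (X - C (9 / 4)) * (X + C 2) ^ 3 ∧
      minpoly ℝ A = (X - C (15 / 4)) * (X - C (9 / 4)) * (X + C 2) ^ 2 ∧
      ¬ ∃ (P : Matrix (Fin 5) (Fin 5) ℝ) (d : Fin 5 → ℝ),
          IsUnit P ∧ A = P * Matrix.diagonal d * P⁻¹ := by
  refine ⟨Realization.A_nonneg, Realization.charpoly_A, Realization.minpoly_A, ?_⟩
  rintro ⟨P, d, hP, hA⟩
  apply Realization.not_squarefree_minpoly_A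
  rw [Realization.A, hA, minpoly_conj hP]
  exact squarefree_minpoly_diagonal d
end
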